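/- arXiv:2403.09545 — 8 statements merged into one kernel-verified Lean document; each statement's English description precedes it below -/
import Mathlib

section
/- Fix an action with cost c > 0, outcome probabilities p(1),...,p(m), and rewards 0 = r(1) ≤ ... ≤ r(m). For a linear contract with parameter α ∈ [0,1], define z(α) as the solution of Σ_{j : α·r(j) > z} p(j)·(α·r(j) − z) = c. Then z(α) is a convex piecewise-linear function of α with at most m linear segments; specifically, on each maximal interval where the set {j : α·r(j) > z(α)} equals {j, j+1, ..., m}, we have z(α) = α·(Σ_{k=j}^m p(k)·r(k)) / (Σ_{k=j}^m p(k)) − c / (Σ_{k=j}^m p(k)), and the slopes of successive segments are nondecreasing. -/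
open Finset Set

namespace Stmt2Aux

variable {m : ℕ}

noncomputable def Hsup (hm : 0 < m) (s t : Fin m → ℝ) (n : ℕ) (α : ℝ) : ℝ :=
  (insert (⟨m - 1, by omega⟩ : Fin m) (Finset.univ.filter (fun k : Fin m => n ≤ k.val))).sup'
    (Finset.insert_nonempty _ _) (fun k => s k * α + t k)

noncomputable def Gsup (hm : 0 < m) (s t : Fin m → ℝ) (n : ℕ) (α : ℝ) : ℝ :=
  (insert (⟨0, hm⟩ : Fin m) (Finset.univ.filter (fun k : Fin m => k.val < n))).sup'
    (Finset.insert_nonempty _ _) (fun k => s k * α + t k)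

noncomputable def Sfull (hm : 0 < m) (s t : Fin m → ℝ) (n : ℕ) : Set ℝ :=
  {1} ∪ {α ∈ Set.Icc (0:ℝ) 1 | Gsup hm s t n α ≤ Hsup hm s t n α}

noncomputable def B (hm : 0 < m) (s t : Fin m → ℝ) (n : ℕ) : ℝ :=
  if n = 0 then 0 else if m ≤ n then 1 else sInf (Sfull hm s t n)

section basic

variable (hm : 0 < m) (s t : Fin m → ℝ)

theorem le_Hsup {n : ℕ} {k : Fin m} (hk : n ≤ k.val) (α : ℝ) :
    s k * α + t k ≤ Hsup hm s t n α := by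
  unfold Hsup
  apply Finset.le_sup' (fun k : Fin m => s k * α + t k)
  exact Finset.mem_insert_of_mem (by simp [hk])

theorem Hsup_le {n : ℕ} (hn : n < m) {α X : ℝ}
    (h : ∀ k : Fin m, n ≤ k.val → s k * α + t k ≤ X) :
    Hsup hm s t n α ≤ X := by
  apply Finset.sup'_le
  intro b hb
  rcases Finset.mem_insert.1 hb with hb | hb
  · exact h b (by simp [hb]; omega)
  · exact h b (by simpa using hb)

theorem Hsup_ex {n : ℕ} (hn : n < m) (α : ℝ) :
    ∃ k : Fin m, n ≤ k.val ∧ Hsup hm s t n α = s k * α + t k := by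
  obtain ⟨k, hk, hk2⟩ := Finset.exists_mem_eq_sup' (Finset.insert_nonempty _ _)
    (fun k : Fin m => s k * α + t k)
  refine ⟨k, ?_, hk2⟩
  rcases Finset.mem_insert.1 hk with hb | hb
  · simp [hb]; omega
  · simpa using hb

theorem le_Gsup {n : ℕ} {k : Fin m} (hk : k.val < n) (α : ℝ) :
    s k * α + t k ≤ Gsup hm s t n α := by
  unfold Gsup
  apply Finset.le_sup' (fun k : Fin m => s k * α + t k)
  exact Finset.mem_insert_of_mem (by simp [hk])

theorem Gsup_le {n : ℕ} (hn : 1 ≤ n) {α X : ℝ}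
    (h : ∀ k : Fin m, k.val < n → s k * α + t k ≤ X) :
    Gsup hm s t n α ≤ X := by
  apply Finset.sup'_le
  intro b hb
  rcases Finset.mem_insert.1 hb with hb | hb
  · exact h b (by simp [hb]; omega)
  · exact h b (by simpa using hb)

theorem Gsup_mono {n n' : ℕ} (hnn : n ≤ n') (α : ℝ) :
    Gsup hm s t n α ≤ Gsup hm s t n' α := by
  unfold Gsup
  apply Finset.sup'_le
  intro b hb
  apply Finset.le_sup' (fun k : Fin m => s k * α + t k)
  rcases Finset.mem_insert.1 hb with hb | hb
  · exact hb ▸ Finset.mem_insert_self _ _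
  · exact Finset.mem_insert_of_mem (by simp at hb ⊢; omega)

theorem Hsup_anti {n n' : ℕ} (hnn : n ≤ n') (α : ℝ) :
    Hsup hm s t n' α ≤ Hsup hm s t n α := by
  unfold Hsup
  apply Finset.sup'_le
  intro b hb
  apply Finset.le_sup' (fun k : Fin m => s k * α + t k)
  rcases Finset.mem_insert.1 hb with hb | hb
  · exact hb ▸ Finset.mem_insert_self _ _
  · exact Finset.mem_insert_of_mem (by simp at hb ⊢; omega)

theorem Gsup_cont (n : ℕ) : Continuous (fun α => Gsup hm s t n α) := by
  rw [continuous_iff_continuousAt]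
  intro x
  exact ContinuousAt.finset_sup'_apply _ (fun i _ => by fun_prop)

theorem Hsup_cont (n : ℕ) : Continuous (fun α => Hsup hm s t n α) := by
  rw [continuous_iff_continuousAt]
  intro x
  exact ContinuousAt.finset_sup'_apply _ (fun i _ => by fun_prop)

theorem Sfull_closed (n : ℕ) : IsClosed (Sfull hm s t n) := by
  apply IsClosed.union isClosed_singleton
  have : {α ∈ Set.Icc (0:ℝ) 1 | Gsup hm s t n α ≤ Hsup hm s t n α}
      = Set.Icc (0:ℝ) 1 ∩ {α | Gsup hm s t n α ≤ Hsup hm s t n α} := rfl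
  rw [this]
  exact isClosed_Icc.inter (isClosed_le (Gsup_cont hm s t n) (Hsup_cont hm s t n))

theorem one_mem_Sfull (n : ℕ) : (1:ℝ) ∈ Sfull hm s t n := Or.inl rfl

theorem Sfull_bdd (n : ℕ) : BddBelow (Sfull hm s t n) := by
  refine ⟨0, fun x hx => ?_⟩
  rcases hx with hx | hx
  · simp at hx; simp [hx]
  · exact hx.1.1

theorem Sfull_subset (n : ℕ) : Sfull hm s t n ⊆ Set.Icc (0:ℝ) 1 := by
  intro x hx
  rcases hx with hx | hx
  · simp at hx; simp [hx]
  · exact hx.1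

theorem Sfull_anti {n n' : ℕ} (hnn : n ≤ n') : Sfull hm s t n' ⊆ Sfull hm s t n := by
  intro x hx
  rcases hx with hx | hx
  · exact Or.inl hx
  · exact Or.inr ⟨hx.1, le_trans (Gsup_mono hm s t hnn x)
      (le_trans hx.2 (Hsup_anti hm s t hnn x))⟩

theorem B_zero : B hm s t 0 = 0 := if_pos rfl

theorem B_top {n : ℕ} (hn : m ≤ n) : B hm s t n = 1 := by
  unfold B
  rw [if_neg (by omega), if_pos hn]

theorem B_mem {n : ℕ} (h1 : 1 ≤ n) (h2 : n < m) : B hm s t n ∈ Sfull hm s t n := by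
  unfold B
  rw [if_neg (by omega), if_neg (by omega)]
  exact (Sfull_closed hm s t n).csInf_mem ⟨1, one_mem_Sfull hm s t n⟩ (Sfull_bdd hm s t n)

theorem B_Icc (n : ℕ) : B hm s t n ∈ Set.Icc (0:ℝ) 1 := by
  rcases Nat.eq_zero_or_pos n with h | h
  · subst h; rw [B_zero]; simp
  rcases le_or_gt m n with h2 | h2
  · rw [B_top hm s t h2]; simp
  · exact Sfull_subset hm s t n (B_mem hm s t h h2)

theorem B_mono {n n' : ℕ} (hnn : n ≤ n') : B hm s t n ≤ B hm s t n' := by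
  rcases Nat.eq_zero_or_pos n with h | h
  · subst h; rw [B_zero]; exact (B_Icc hm s t n').1
  rcases le_or_gt m n' with h2 | h2
  · rw [B_top hm s t h2]; exact (B_Icc hm s t n).2
  · have h1 : 1 ≤ n' := le_trans h hnn
    have hnm : n < m := lt_of_le_of_lt hnn h2
    unfold B
    rw [if_neg (by omega), if_neg (by omega), if_neg (by omega), if_neg (by omega)]
    exact csInf_le_csInf (Sfull_bdd hm s t n) ⟨1, one_mem_Sfull hm s t n'⟩
      (Sfull_anti hm s t hnn)

end basic


section main

variable {hm : 0 < m} {s t : Fin m → ℝ}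

theorem cond_up (hs : Monotone s) {n : ℕ} (hn1 : 1 ≤ n) (hnm : n < m) {α α' : ℝ}
    (hαα : α ≤ α') (h : Gsup hm s t n α ≤ Hsup hm s t n α) :
    Gsup hm s t n α' ≤ Hsup hm s t n α' := by
  obtain ⟨l, hl, hHl⟩ := Hsup_ex hm s t hnm α
  apply Gsup_le hm s t hn1
  intro k hk
  have hkl : k ≤ l := by rw [Fin.le_def]; omega
  have hsl : s k * (α' - α) ≤ s l * (α' - α) :=
    mul_le_mul_of_nonneg_right (hs hkl) (by linarith)
  have h1 : s k * α + t k ≤ Hsup hm s t n α :=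
    le_trans (le_Gsup hm s t hk α) h
  have h2 : s l * α' + t l ≤ Hsup hm s t n α' := le_Hsup hm s t hl α'
  have e1 : s k * α' + t k = (s k * α + t k) + s k * (α' - α) := by ring
  have e2 : s l * α' + t l = (s l * α + t l) + s l * (α' - α) := by ring
  rw [hHl] at h1
  linarith

theorem pw (hm : 0 < m) (s t : Fin m → ℝ) (hs : Monotone s) (z : ℝ → ℝ)
    (hle : ∀ α ∈ Set.Icc (0:ℝ) 1, ∀ k, s k * α + t k ≤ z α)
    (heq : ∀ α ∈ Set.Icc (0:ℝ) 1, ∃ k, z α = s k * α + t k) :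
    ∃ (β : Fin (m+1) → ℝ) (intercept : Fin m → ℝ),
      Monotone β ∧ β 0 = 0 ∧ β (Fin.last m) = 1 ∧
      ∀ (j : Fin m) (α : ℝ), α ∈ Set.Icc (β j.castSucc) (β j.succ) →
        z α = s j * α + intercept j := by
  -- z is the max of G n and H n
  have hzmax : ∀ α ∈ Set.Icc (0:ℝ) 1, ∀ n : ℕ, 1 ≤ n → n < m →
      z α = max (Gsup hm s t n α) (Hsup hm s t n α) := by
    intro α hα n hn1 hnm
    apply le_antisymm
    · obtain ⟨k, hk⟩ := heq α hα
      rcases lt_or_ge k.val n with h | h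
      · exact le_trans (hk ▸ le_Gsup hm s t h α) (le_max_left _ _)
      · exact le_trans (hk ▸ le_Hsup hm s t h α) (le_max_right _ _)
    · exact max_le (Gsup_le hm s t hn1 (fun k _ => hle α hα k))
        (Hsup_le hm s t hnm (fun k _ => hle α hα k))
  have hzH0 : ∀ α ∈ Set.Icc (0:ℝ) 1, z α = Hsup hm s t 0 α := by
    intro α hα
    apply le_antisymm
    · obtain ⟨k, hk⟩ := heq α hα
      exact hk ▸ le_Hsup hm s t (Nat.zero_le _) α
    · exact Hsup_le hm s t hm (fun k _ => hle α hα k)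
  -- step 1 : z = H n on [B n, 1] when B n < 1
  have hzH : ∀ n : ℕ, n < m → ∀ α : ℝ, B hm s t n ≤ α → α ≤ 1 →
      B hm s t n < 1 → z α = Hsup hm s t n α := by
    intro n hnm α hBα hα1 hB1
    have h0α : (0:ℝ) ≤ α := le_trans (B_Icc hm s t n).1 hBα
    rcases Nat.eq_zero_or_pos n with h | hn1
    · subst h; exact hzH0 α ⟨h0α, hα1⟩
    · have hmem := B_mem hm s t hn1 hnm
      have hcond : Gsup hm s t n (B hm s t n) ≤ Hsup hm s t n (B hm s t n) := by
        rcases hmem with h | h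
        · simp at h; exact absurd h (ne_of_lt hB1)
        · exact h.2
      have hcondα := cond_up hs hn1 hnm hBα hcond
      rw [hzmax α ⟨h0α, hα1⟩ n hn1 hnm]
      exact max_eq_right hcondα
  -- step 2 : on a nondegenerate [B n, B (n+1)], z equals the j-th affine piece
  have hpiece : ∀ (j : Fin m), B hm s t j.val < B hm s t (j.val + 1) →
      ∀ α : ℝ, B hm s t j.val ≤ α → α ≤ B hm s t (j.val + 1) →
      z α = s j * α + t j := by
    intro j hd α hα1 hα2
    set n := j.val with hn
    set tb := B hm s t (n+1) with htb
    have htb1 : tb ≤ 1 := (B_Icc hm s t (n+1)).2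
    have h0Bn : (0:ℝ) ≤ B hm s t n := (B_Icc hm s t n).1
    have hα1' : α ≤ 1 := le_trans hα2 htb1
    have hBn1 : B hm s t n < 1 := lt_of_lt_of_le hd htb1
    have hnm : n < m := j.isLt
    -- interior points are in C'
    have hint : ∀ γ : ℝ, B hm s t n < γ → γ < tb →
        ∀ k : Fin m, n ≤ k.val → s k * γ + t k ≤ s j * γ + t j := by
      intro γ hγ1 hγ2 k hk
      rcases eq_or_lt_of_le hk with hk' | hk'
      · have : k = j := Fin.ext (by omega)
        rw [this]
      · -- k.val ≥ n + 1, thus n + 1 < m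
        have hn1m : n + 1 < m := lt_of_le_of_lt hk' k.isLt
        have hγIcc : γ ∈ Set.Icc (0:ℝ) 1 := ⟨le_trans h0Bn (le_of_lt hγ1),
          le_trans (le_of_lt hγ2) htb1⟩
        have hγnot : γ ∉ Sfull hm s t (n+1) := by
          intro hmem
          have : tb ≤ γ := by
            rw [htb]; unfold B
            rw [if_neg (by omega), if_neg (by omega)]
            exact csInf_le (Sfull_bdd hm s t (n+1)) hmem
          linarith
        have hlt : Hsup hm s t (n+1) γ < Gsup hm s t (n+1) γ := by
          by_contra hcon
          exact hγnot (Or.inr ⟨hγIcc, not_lt.1 hcon⟩)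
        have hz1 : z γ = Hsup hm s t n γ :=
          hzH n hnm γ (le_of_lt hγ1) hγIcc.2 hBn1
        have hz2 : z γ = Gsup hm s t (n+1) γ := by
          rw [hzmax γ hγIcc (n+1) (by omega) hn1m]
          exact max_eq_left (le_of_lt hlt)
        have hHn1z : Hsup hm s t (n+1) γ < Hsup hm s t n γ := by
          rw [← hz1, hz2]; exact hlt
        -- H n γ ≤ max (A j γ) (H (n+1) γ)
        have hHle : Hsup hm s t n γ ≤ max (s j * γ + t j) (Hsup hm s t (n+1) γ) := by
          apply Hsup_le hm s t hnm
          intro k' hk'2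
          rcases eq_or_lt_of_le hk'2 with h | h
          · have : k' = j := Fin.ext (by omega)
            rw [this]; exact le_max_left _ _
          · exact le_trans (le_Hsup hm s t (by omega) γ) (le_max_right _ _)
        have hHnA : Hsup hm s t n γ ≤ s j * γ + t j := by
          rcases max_cases (s j * γ + t j) (Hsup hm s t (n+1) γ) with ⟨he, _⟩ | ⟨he, _⟩
          · rwa [he] at hHle
          · rw [he] at hHle; linarith
        exact le_trans (le_trans (le_Hsup hm s t (by omega) γ) (le_of_lt hHn1z)) hHnA
    -- tb is in the closed set C'
    have htbC : ∀ k : Fin m, n ≤ k.val → s k * tb + t k ≤ s j * tb + t j := by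
      have hclosed : IsClosed {γ : ℝ | ∀ k : Fin m, n ≤ k.val →
          s k * γ + t k ≤ s j * γ + t j} := by
        have : {γ : ℝ | ∀ k : Fin m, n ≤ k.val → s k * γ + t k ≤ s j * γ + t j}
            = ⋂ k : Fin m, {γ : ℝ | n ≤ k.val → s k * γ + t k ≤ s j * γ + t j} := by
          ext γ; simp
        rw [this]
        apply isClosed_iInter
        intro k
        by_cases hk : n ≤ k.val
        · simp only [hk, forall_true_left]
          exact isClosed_le (by fun_prop) (by fun_prop)
        · simp only [hk]; simp
      have hsub : Set.Ioo (B hm s t n) tb ⊆ {γ : ℝ | ∀ k : Fin m, n ≤ k.val →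
          s k * γ + t k ≤ s j * γ + t j} := fun γ hγ => hint γ hγ.1 hγ.2
      have : tb ∈ closure (Set.Ioo (B hm s t n) tb) := by
        rw [closure_Ioo (ne_of_lt hd)]
        exact Set.right_mem_Icc.2 (le_of_lt hd)
      exact hclosed.closure_subset (closure_mono hsub this)
    -- downward closedness from tb
    have hdown : ∀ k : Fin m, n ≤ k.val → s k * α + t k ≤ s j * α + t j := by
      intro k hk
      have hjk : j ≤ k := by rw [Fin.le_def]; omega
      have h1 := htbC k hk
      nlinarith [mul_nonneg (sub_nonneg.2 (hs hjk)) (sub_nonneg.2 hα2)]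
    have hzHα : z α = Hsup hm s t n α := hzH n hnm α hα1 hα1' hBn1
    rw [hzHα]
    apply le_antisymm
    · exact Hsup_le hm s t hnm hdown
    · exact le_Hsup hm s t (le_refl n) α
  -- assemble
  refine ⟨fun i => B hm s t i.val,
    fun j => if B hm s t j.val < B hm s t (j.val + 1) then t j
             else z (B hm s t j.val) - s j * B hm s t j.val, ?_, ?_, ?_, ?_⟩
  · intro i i' hii
    exact B_mono hm s t hii
  · exact B_zero hm s t
  · exact B_top hm s t (le_refl m)
  · intro j α hα
    simp only [Fin.coe_castSucc, Fin.val_succ] at hα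
    dsimp only
    by_cases hd : B hm s t j.val < B hm s t (j.val + 1)
    · rw [if_pos hd]
      exact hpiece j hd α hα.1 hα.2
    · rw [if_neg hd]
      have heq1 : B hm s t (j.val + 1) = B hm s t j.val :=
        le_antisymm (not_lt.1 hd) (B_mono hm s t (by omega))
      have hαeq : α = B hm s t j.val := le_antisymm (heq1 ▸ hα.2) hα.1
      rw [hαeq]; ring

end main

end Stmt2Aux

namespace Stmt2Aux

def Ssum {m : ℕ} (p : Fin m → ℝ) (j : Fin m) : ℝ :=
  ∑ k ∈ Finset.univ.filter (fun k : Fin m => j ≤ k), p k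

def Rsum {m : ℕ} (p r : Fin m → ℝ) (j : Fin m) : ℝ :=
  ∑ k ∈ Finset.univ.filter (fun k : Fin m => j ≤ k), p k * r k

end Stmt2Aux

open Stmt2Aux in
/-- the reservation value `z(α)` of an action under the linear
contract with parameter `α` is a convex piecewise-linear function of `α` with
at most `m` segments of nondecreasing slopes; on a region where
`{k : α·r k > z α} = {k : j ≤ k}` it is given by the explicit linear formula. -/
theorem stmt2 (m : ℕ) (hm : 0 < m) (p r : Fin m → ℝ) (c : ℝ)
    (hp : ∀ j, 0 ≤ p j) (hc : 0 < c)
    (hr0 : r ⟨0, hm⟩ = 0) (hrmono : Monotone r)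
    (z : ℝ → ℝ)
    (hz : ∀ α ∈ Set.Icc (0:ℝ) 1,
      ∑ j ∈ Finset.univ.filter (fun j => α * r j > z α), p j * (α * r j - z α) = c) :
    ConvexOn ℝ (Set.Icc (0:ℝ) 1) z ∧
    (∀ α ∈ Set.Icc (0:ℝ) 1, ∀ j : Fin m,
      (Finset.univ.filter (fun k => α * r k > z α)
        = Finset.univ.filter (fun k : Fin m => j ≤ k)) →
      (0 < ∑ k ∈ Finset.univ.filter (fun k : Fin m => j ≤ k), p k) →
      z α = α * (∑ k ∈ Finset.univ.filter (fun k : Fin m => j ≤ k), p k * r k)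
              / (∑ k ∈ Finset.univ.filter (fun k : Fin m => j ≤ k), p k)
            - c / (∑ k ∈ Finset.univ.filter (fun k : Fin m => j ≤ k), p k)) ∧
    ∃ (β : Fin (m+1) → ℝ) (slope intercept : Fin m → ℝ),
      Monotone β ∧ β 0 = 0 ∧ β (Fin.last m) = 1 ∧ Monotone slope ∧
      ∀ (j : Fin m) (α : ℝ), α ∈ Set.Icc (β j.castSucc) (β j.succ) →
        z α = slope j * α + intercept j := by
  classical
  have hSanti : ∀ {j j' : Fin m}, j ≤ j' → Ssum p j' ≤ Ssum p j := by
    intro j j' h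
    apply Finset.sum_le_sum_of_subset_of_nonneg
    · intro k hk
      simp only [Finset.mem_filter, Finset.mem_univ, true_and] at hk ⊢
      exact le_trans h hk
    · exact fun k _ _ => hp k
  have hr_nonneg : ∀ k, 0 ≤ r k := fun k =>
    hr0 ▸ hrmono (show (⟨0, hm⟩ : Fin m) ≤ k by rw [Fin.le_def]; exact Nat.zero_le _)
  have hexp : ∀ (α : ℝ) (Q : Finset (Fin m)),
      ∑ k ∈ Q, p k * (α * r k - z α)
        = α * (∑ k ∈ Q, p k * r k) - z α * (∑ k ∈ Q, p k) := by
    intro α Q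
    rw [Finset.mul_sum, Finset.mul_sum, ← Finset.sum_sub_distrib]
    exact Finset.sum_congr rfl (fun k _ => by ring)
  have hsolve : ∀ α ∈ Set.Icc (0:ℝ) 1, ∀ j : Fin m,
      (Finset.univ.filter (fun k => α * r k > z α)
        = Finset.univ.filter (fun k : Fin m => j ≤ k)) →
      0 < Ssum p j → z α = α * Rsum p r j / Ssum p j - c / Ssum p j := by
    intro α hα j hfil hSpos
    have h1 := hz α hα
    rw [hfil, hexp] at h1
    rw [← sub_div, eq_div_iff (ne_of_gt hSpos)]
    unfold Ssum Rsum at *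
    linarith
  have hkey : ∀ α ∈ Set.Icc (0:ℝ) 1, ∃ j : Fin m, 0 < Ssum p j ∧
      (Finset.univ.filter (fun k => α * r k > z α)
        = Finset.univ.filter (fun k : Fin m => j ≤ k)) := by
    intro α hα
    have h1 := hz α hα
    have hne : (Finset.univ.filter (fun k : Fin m => α * r k > z α)).Nonempty := by
      rw [Finset.nonempty_iff_ne_empty]
      intro h
      rw [h, Finset.sum_empty] at h1
      linarith
    set Fl := Finset.univ.filter (fun k : Fin m => α * r k > z α) with hFl
    set j0 := Fl.min' hne with hj0
    have hj0mem : j0 ∈ Fl := Fl.min'_mem hne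
    have hj0gt : z α < α * r j0 := by
      rw [hFl, Finset.mem_filter] at hj0mem
      exact hj0mem.2
    have hfil : Fl = Finset.univ.filter (fun k : Fin m => j0 ≤ k) := by
      ext k
      simp only [hFl, Finset.mem_filter, Finset.mem_univ, true_and]
      constructor
      · intro hk
        exact Fl.min'_le k (by rw [hFl, Finset.mem_filter]; exact ⟨Finset.mem_univ _, hk⟩)
      · intro hk
        have h2 : α * r j0 ≤ α * r k := mul_le_mul_of_nonneg_left (hrmono hk) hα.1
        linarith
    have hpex : ∃ k ∈ Fl, 0 < p k := by
      by_contra hcon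
      push_neg at hcon
      have h0 : ∀ k ∈ Fl, p k * (α * r k - z α) = 0 := fun k hk => by
        have : p k = 0 := le_antisymm (hcon k hk) (hp k)
        rw [this, zero_mul]
      rw [Finset.sum_eq_zero h0] at h1
      linarith
    obtain ⟨k0, hk0F, hk0p⟩ := hpex
    have hSpos : 0 < Ssum p j0 := by
      have hk0' : k0 ∈ Finset.univ.filter (fun k : Fin m => j0 ≤ k) := hfil ▸ hk0F
      have := Finset.single_le_sum (f := p) (fun i _ => hp i) hk0'
      unfold Ssum
      linarith
    exact ⟨j0, hSpos, hfil⟩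
  have hkeyle : ∀ α ∈ Set.Icc (0:ℝ) 1, ∀ j : Fin m, 0 < Ssum p j →
      α * Rsum p r j / Ssum p j - c / Ssum p j ≤ z α := by
    intro α hα j hSpos
    have h1 := hz α hα
    set Fl := Finset.univ.filter (fun k : Fin m => α * r k > z α) with hFl
    set Ts := Finset.univ.filter (fun k : Fin m => j ≤ k) with hTs
    have hsplit : ∑ k ∈ Ts ∩ Fl, p k * (α * r k - z α)
        + ∑ k ∈ Ts \ Fl, p k * (α * r k - z α)
        = ∑ k ∈ Ts, p k * (α * r k - z α) := Finset.sum_inter_add_sum_sdiff _ _ _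
    have h2 : ∑ k ∈ Ts \ Fl, p k * (α * r k - z α) ≤ 0 := by
      apply Finset.sum_nonpos
      intro k hk
      rw [Finset.mem_sdiff] at hk
      have hk2 : ¬ (α * r k > z α) := by
        intro hgt
        exact hk.2 (by rw [hFl, Finset.mem_filter]; exact ⟨Finset.mem_univ _, hgt⟩)
      exact mul_nonpos_of_nonneg_of_nonpos (hp k) (by push_neg at hk2; linarith)
    have h3 : ∑ k ∈ Ts ∩ Fl, p k * (α * r k - z α)
        ≤ ∑ k ∈ Fl, p k * (α * r k - z α) := by
      apply Finset.sum_le_sum_of_subset_of_nonneg Finset.inter_subset_right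
      intro k hk _
      rw [hFl, Finset.mem_filter] at hk
      exact mul_nonneg (hp k) (by linarith [hk.2])
    have h4 : ∑ k ∈ Ts, p k * (α * r k - z α) ≤ c := by
      rw [← hsplit]; linarith
    rw [hexp] at h4
    rw [← sub_div, div_le_iff₀ (by exact hSpos)]
    unfold Ssum Rsum at *
    nlinarith [h4]
  -- combined representation
  have hkey' : ∀ α ∈ Set.Icc (0:ℝ) 1, ∃ j : Fin m, 0 < Ssum p j ∧
      z α = α * Rsum p r j / Ssum p j - c / Ssum p j := by
    intro α hα
    obtain ⟨j, hSpos, hfil⟩ := hkey α hα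
    exact ⟨j, hSpos, hsolve α hα j hfil hSpos⟩
  refine ⟨?_, ?_, ?_⟩
  · -- convexity
    refine ⟨convex_Icc 0 1, ?_⟩
    intro x hx y hy a b ha hb hab
    have hxy : a • x + b • y ∈ Set.Icc (0:ℝ) 1 := (convex_Icc (0:ℝ) 1) hx hy ha hb hab
    obtain ⟨j, hSpos, hzj⟩ := hkey' _ hxy
    have h1 := hkeyle x hx j hSpos
    have h2 := hkeyle y hy j hSpos
    rw [hzj]
    simp only [smul_eq_mul] at *
    have hS' : Ssum p j ≠ 0 := ne_of_gt hSpos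
    have e : (a * x + b * y) * Rsum p r j / Ssum p j - c / Ssum p j
        = a * (x * Rsum p r j / Ssum p j - c / Ssum p j)
          + b * (y * Rsum p r j / Ssum p j - c / Ssum p j) := by
      field_simp
      linear_combination c * hab
    rw [e]
    have h3 : a * (x * Rsum p r j / Ssum p j - c / Ssum p j) ≤ a * z x :=
      mul_le_mul_of_nonneg_left h1 ha
    have h4 : b * (y * Rsum p r j / Ssum p j - c / Ssum p j) ≤ b * z y :=
      mul_le_mul_of_nonneg_left h2 hb
    linarith
  · -- explicit formula
    intro α hα j hfil hSpos
    exact hsolve α hα j hfil hSpos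
  · -- piecewise linearity
    obtain ⟨jstar, hjstar, _⟩ := hkey' 0 ⟨le_refl 0, zero_le_one⟩
    have hTne : (Finset.univ.filter (fun j : Fin m => 0 < Ssum p j)).Nonempty :=
      ⟨jstar, by rw [Finset.mem_filter]; exact ⟨Finset.mem_univ _, hjstar⟩⟩
    set T := Finset.univ.filter (fun j : Fin m => 0 < Ssum p j) with hT
    set jm := T.max' hTne with hjm
    have hjmpos : 0 < Ssum p jm :=
      (Finset.mem_filter.mp (T.max'_mem hTne)).2
    set q : Fin m → Fin m := fun j => if 0 < Ssum p j then j else jm with hq_def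
    have hq : ∀ j, 0 < Ssum p (q j) := by
      intro j
      rw [hq_def]
      dsimp only
      by_cases h : 0 < Ssum p j
      · rwa [if_pos h]
      · rwa [if_neg h]
    have hratio : ∀ j j' : Fin m, j ≤ j' → 0 < Ssum p j' →
        Rsum p r j / Ssum p j ≤ Rsum p r j' / Ssum p j' := by
      intro j j' hjj hS'
      have hSS : Ssum p j' ≤ Ssum p j := hSanti hjj
      have hSj : 0 < Ssum p j := lt_of_lt_of_le hS' hSS
      have hsub : Finset.univ.filter (fun k : Fin m => j' ≤ k)
          ⊆ Finset.univ.filter (fun k : Fin m => j ≤ k) := by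
        intro k hk
        simp only [Finset.mem_filter, Finset.mem_univ, true_and] at hk ⊢
        exact le_trans hjj hk
      have hsplit_r := Finset.sum_sdiff (f := fun k => p k * r k) hsub
      have hsplit_p := Finset.sum_sdiff (f := p) hsub
      set Df := Finset.univ.filter (fun k : Fin m => j ≤ k)
        \ Finset.univ.filter (fun k : Fin m => j' ≤ k) with hDf
      have hDr : ∑ k ∈ Df, p k * r k ≤ r j' * ∑ k ∈ Df, p k := by
        rw [Finset.mul_sum]
        apply Finset.sum_le_sum
        intro k hk
        rw [hDf, Finset.mem_sdiff] at hk
        have hk2 : ¬ j' ≤ k := by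
          intro h
          exact hk.2 (by rw [Finset.mem_filter]; exact ⟨Finset.mem_univ _, h⟩)
        have : k ≤ j' := le_of_lt (lt_of_not_ge hk2)
        calc p k * r k ≤ p k * r j' := mul_le_mul_of_nonneg_left (hrmono this) (hp k)
        _ = r j' * p k := mul_comm _ _
      have hR' : r j' * Ssum p j' ≤ Rsum p r j' := by
        unfold Ssum Rsum
        rw [Finset.mul_sum]
        apply Finset.sum_le_sum
        intro k hk
        rw [Finset.mem_filter] at hk
        calc r j' * p k = p k * r j' := mul_comm _ _
        _ ≤ p k * r k := mul_le_mul_of_nonneg_left (hrmono hk.2) (hp k)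
      have hD0 : (0:ℝ) ≤ ∑ k ∈ Df, p k := Finset.sum_nonneg (fun k _ => hp k)
      rw [div_le_div_iff₀ hSj hS']
      have hreq : Rsum p r j = (∑ k ∈ Df, p k * r k) + Rsum p r j' := by
        unfold Rsum; linarith [hsplit_r]
      have hseq : Ssum p j = (∑ k ∈ Df, p k) + Ssum p j' := by
        unfold Ssum; linarith [hsplit_p]
      rw [hreq, hseq]
      nlinarith [mul_le_mul_of_nonneg_right hDr (le_of_lt hS'),
        mul_le_mul_of_nonneg_right hR' hD0]
    have hslope_mono : Monotone (fun j => Rsum p r (q j) / Ssum p (q j)) := by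
      intro j j' hjj
      dsimp only
      rw [hq_def]
      dsimp only
      by_cases h' : 0 < Ssum p j'
      · have hjpos : 0 < Ssum p j := lt_of_lt_of_le h' (hSanti hjj)
        rw [if_pos hjpos, if_pos h']
        exact hratio j j' hjj h'
      · rw [if_neg h']
        by_cases hjp : 0 < Ssum p j
        · rw [if_pos hjp]
          have hjmem : j ∈ T := by rw [hT, Finset.mem_filter]; exact ⟨Finset.mem_univ _, hjp⟩
          exact hratio j jm (T.le_max' j hjmem) hjmpos
        · rw [if_neg hjp]
    have haffine : ∀ (j : Fin m) (α : ℝ),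
        Rsum p r (q j) / Ssum p (q j) * α + (-(c / Ssum p (q j)))
          = α * Rsum p r (q j) / Ssum p (q j) - c / Ssum p (q j) := by
      intro j α; ring
    have hle : ∀ α ∈ Set.Icc (0:ℝ) 1, ∀ k : Fin m,
        Rsum p r (q k) / Ssum p (q k) * α + (-(c / Ssum p (q k))) ≤ z α := by
      intro α hα k
      rw [haffine]
      exact hkeyle α hα (q k) (hq k)
    have heq2 : ∀ α ∈ Set.Icc (0:ℝ) 1, ∃ k : Fin m,
        z α = Rsum p r (q k) / Ssum p (q k) * α + (-(c / Ssum p (q k))) := by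
      intro α hα
      obtain ⟨j, hSj, hzj⟩ := hkey' α hα
      refine ⟨j, ?_⟩
      have hqj : q j = j := by rw [hq_def]; dsimp only; rw [if_pos hSj]
      rw [haffine, hqj]
      exact hzj
    obtain ⟨β, intercept, hβm, hβ0, hβ1, hmain⟩ :=
      Stmt2Aux.pw hm (fun j => Rsum p r (q j) / Ssum p (q j))
        (fun j => -(c / Ssum p (q j))) hslope_mono z hle heq2
    exact ⟨β, _, intercept, hβm, hβ0, hβ1, hslope_mono, hmain⟩
end

section
/- With z(α) the reservation value of a fixed action under linear contract parameter α (as defined by Σ_{j: α r(j) > z} p(j)(α r(j) − z) = c with c > 0), the threshold α_j = inf{α ∈ [0,1] : z(α) ≥ α·r(j)} satisfies, whenever finite and Σ_{k=j}^m p(k)(r(k) − r(j)) > 0: α_j = c / (Σ_{k=j}^m p(k)·(r(k) − r(j))). -/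
/-- the threshold `α_j = inf {α ∈ [0,1] : z(α) ≥ α·r j}` equals
`c / Σ_{k ≥ j} p k * (r k - r j)` whenever the set is nonempty and the
denominator is positive. -/
theorem stmt3 (m : ℕ) (p r : Fin m → ℝ) (c : ℝ) (hc : 0 < c)
    (hp : ∀ j, 0 ≤ p j) (hrmono : Monotone r) (j : Fin m)
    (z : ℝ → ℝ)
    (hz : ∀ α ∈ Set.Icc (0:ℝ) 1,
      ∑ k ∈ Finset.univ.filter (fun k => α * r k > z α), p k * (α * r k - z α) = c)
    (hne : {α ∈ Set.Icc (0:ℝ) 1 | z α ≥ α * r j}.Nonempty)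
    (hden : 0 < ∑ k ∈ Finset.univ.filter (fun k : Fin m => j ≤ k), p k * (r k - r j)) :
    sInf {α ∈ Set.Icc (0:ℝ) 1 | z α ≥ α * r j}
      = c / ∑ k ∈ Finset.univ.filter (fun k : Fin m => j ≤ k), p k * (r k - r j) := by
  set D := ∑ k ∈ Finset.univ.filter (fun k : Fin m => j ≤ k), p k * (r k - r j) with hDdef
  -- the key equivalence
  have key : ∀ α ∈ Set.Icc (0:ℝ) 1, (z α ≥ α * r j ↔ c ≤ α * D) := by
    intro α hα
    obtain ⟨hα0, hα1⟩ := hα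
    have hG : ∀ k ∈ Finset.univ.filter (fun k : Fin m => j ≤ k),
        α * r j ≤ α * r k := by
      intro k hk
      have : j ≤ k := (Finset.mem_filter.1 hk).2
      exact mul_le_mul_of_nonneg_left (hrmono this) hα0
    have hsumG : ∑ k ∈ Finset.univ.filter (fun k : Fin m => j ≤ k),
        p k * (α * r k - α * r j) = α * D := by
      rw [hDdef, Finset.mul_sum]
      apply Finset.sum_congr rfl
      intro k _
      ring
    constructor
    · intro h
      have hFG : Finset.univ.filter (fun k => α * r k > z α)
          ⊆ Finset.univ.filter (fun k : Fin m => j ≤ k) := by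
        intro k hk
        have hk' : α * r k > z α := (Finset.mem_filter.1 hk).2
        have h1 : α * r j < α * r k := lt_of_le_of_lt h hk'
        simp only [Finset.mem_filter, Finset.mem_univ, true_and]
        by_contra hjk
        have : k ≤ j := le_of_lt (lt_of_not_ge hjk)
        have : α * r k ≤ α * r j := mul_le_mul_of_nonneg_left (hrmono this) hα0
        linarith
      have step1 : c ≤ ∑ k ∈ Finset.univ.filter (fun k => α * r k > z α),
          p k * (α * r k - α * r j) := by
        rw [← hz α ⟨hα0, hα1⟩]
        apply Finset.sum_le_sum
        intro k _
        have := hp k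
        nlinarith
      have step2 : ∑ k ∈ Finset.univ.filter (fun k => α * r k > z α),
          p k * (α * r k - α * r j)
          ≤ ∑ k ∈ Finset.univ.filter (fun k : Fin m => j ≤ k),
          p k * (α * r k - α * r j) := by
        apply Finset.sum_le_sum_of_subset_of_nonneg hFG
        intro k hk _
        have h1 := hG k hk
        have := hp k
        nlinarith
      linarith [hsumG ▸ le_trans step1 step2]
    · intro h
      by_contra hlt
      push_neg at hlt
      have hGF : Finset.univ.filter (fun k : Fin m => j ≤ k)
          ⊆ Finset.univ.filter (fun k => α * r k > z α) := by
        intro k hk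
        have := hG k hk
        simp only [Finset.mem_filter, Finset.mem_univ, true_and]
        linarith
      -- a witness with positive contribution
      obtain ⟨k0, hk0mem, hk0pos⟩ : ∃ k ∈ Finset.univ.filter (fun k : Fin m => j ≤ k),
          0 < p k * (r k - r j) := by
        by_contra hall
        push_neg at hall
        have : D ≤ 0 := by
          rw [hDdef]
          exact Finset.sum_nonpos hall
        linarith
      have hpk0 : 0 < p k0 := by
        rcases lt_or_ge 0 (p k0) with h' | h'
        · exact h'
        · nlinarith [hrmono (Finset.mem_filter.1 hk0mem).2]
      have strict : ∑ k ∈ Finset.univ.filter (fun k : Fin m => j ≤ k),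
          p k * (α * r k - α * r j)
          < ∑ k ∈ Finset.univ.filter (fun k : Fin m => j ≤ k),
          p k * (α * r k - z α) := by
        apply Finset.sum_lt_sum
        · intro k _
          have := hp k
          nlinarith
        · exact ⟨k0, hk0mem, by nlinarith⟩
      have step2 : ∑ k ∈ Finset.univ.filter (fun k : Fin m => j ≤ k),
          p k * (α * r k - z α)
          ≤ ∑ k ∈ Finset.univ.filter (fun k => α * r k > z α),
          p k * (α * r k - z α) := by
        apply Finset.sum_le_sum_of_subset_of_nonneg hGF
        intro k hk _
        have : α * r k > z α := (Finset.mem_filter.1 hk).2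
        have := hp k
        nlinarith
      rw [hz α ⟨hα0, hα1⟩] at step2
      rw [hsumG] at strict
      linarith
  -- the set is an interval
  have hSeq : {α ∈ Set.Icc (0:ℝ) 1 | z α ≥ α * r j} = Set.Icc (c / D) 1 := by
    ext α
    simp only [Set.mem_setOf_eq, Set.mem_Icc]
    constructor
    · rintro ⟨⟨h0, h1⟩, hge⟩
      exact ⟨(div_le_iff₀ hden).2 ((key α ⟨h0, h1⟩).1 hge), h1⟩
    · rintro ⟨hcd, h1⟩
      have h0 : (0:ℝ) ≤ α := le_trans (le_of_lt (div_pos hc hden)) hcd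
      exact ⟨⟨h0, h1⟩, (key α ⟨h0, h1⟩).2 ((div_le_iff₀ hden).1 hcd)⟩
  rw [hSeq] at hne ⊢
  exact csInf_Icc (Set.nonempty_Icc.1 hne)
end

section
/- For any finite family of random variables {X_i}_{i∈A} taking values in a finite set M ⊆ ℝ≥0 with joint support R and pmf p, there exists a coverage function f = (U, {w_u}, A, h) with |U| ≤ |R|·|M| such that for all S ⊆ A, f(S) = E[max_{i∈S} X_i] (with the convention max over ∅ equals 0). Specifically, take U = R × M, w_{(v,m)} = p(v)·(m − prev(m)) where prev(m) = max{x ∈ M : x < m} (or 0 if none), and h(i) = {(v,m) : v_i ≥ m}. -/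

lemma tele (T : Finset NNReal) :
    ∑ m ∈ T, ((m : ℝ) - (((T.filter (fun y => y < m)).sup id : NNReal) : ℝ))
      = ((T.sup id : NNReal) : ℝ) := by
  induction T using Finset.strongInduction with
  | _ T ih =>
    rcases T.eq_empty_or_nonempty with rfl | hT
    · simp
    · set t := T.max' hT with ht
      have htT : t ∈ T := T.max'_mem hT
      have herase : T.filter (fun y => y < t) = T.erase t := by
        ext y; simp only [Finset.mem_filter, Finset.mem_erase]
        constructor
        · exact fun ⟨hy, hlt⟩ => ⟨ne_of_lt hlt, hy⟩
        · exact fun ⟨hne, hy⟩ => ⟨hy, lt_of_le_of_ne (T.le_max' y hy) hne⟩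
      have key : ∀ m ∈ T.erase t,
          T.filter (fun y => y < m) = (T.erase t).filter (fun y => y < m) := by
        intro m hm
        obtain ⟨hmne, hmT⟩ := Finset.mem_erase.mp hm
        have hmt : m < t := lt_of_le_of_ne (T.le_max' m hmT) hmne
        ext y; simp only [Finset.mem_filter, Finset.mem_erase]
        constructor
        · rintro ⟨hy, hlt⟩
          exact ⟨⟨ne_of_lt (lt_trans hlt hmt), hy⟩, hlt⟩
        · rintro ⟨⟨_, hy⟩, hlt⟩; exact ⟨hy, hlt⟩
      have hsupT : T.sup id = t := by
        apply le_antisymm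
        · exact Finset.sup_le fun y hy => T.le_max' y hy
        · exact Finset.le_sup (f := id) htT
      rw [← Finset.add_sum_erase _ _ htT, herase, hsupT]
      have : ∑ m ∈ T.erase t, ((m : ℝ) - (((T.filter (fun y => y < m)).sup id : NNReal) : ℝ))
          = (((T.erase t).sup id : NNReal) : ℝ) := by
        rw [Finset.sum_congr rfl (fun m hm => by rw [key m hm])]
        exact ih (T.erase t) (Finset.erase_ssubset htT)
      rw [this]; ring

lemma layerB (A : Type) (M : Finset NNReal) (v : A → NNReal) (hv : ∀ i, v i ∈ M)
    (S : Finset A) :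
    ∑ m ∈ M.filter (fun m => ∃ i ∈ S, m ≤ v i),
        ((m : ℝ) - (((M.filter (fun y => y < m)).sup id : NNReal) : ℝ))
      = ((S.sup v : NNReal) : ℝ) := by
  rcases S.eq_empty_or_nonempty with rfl | hS
  · simp
  · obtain ⟨i₀, hi₀, hx⟩ := Finset.exists_mem_eq_sup S hS v
    set x := S.sup v with hxdef
    have hxM : x ∈ M := hx ▸ hv i₀
    have hfilt : M.filter (fun m => ∃ i ∈ S, m ≤ v i) = M.filter (fun m => m ≤ x) := by
      ext m; simp only [Finset.mem_filter, and_congr_right_iff]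
      intro _
      constructor
      · rintro ⟨i, hi, hle⟩; exact hle.trans (Finset.le_sup hi)
      · intro hle; exact ⟨i₀, hi₀, hle.trans_eq hx⟩
    rw [hfilt]
    set T := M.filter (fun m => m ≤ x) with hT
    have hsub : ∀ m ∈ T, M.filter (fun y => y < m) = T.filter (fun y => y < m) := by
      intro m hm
      obtain ⟨hmM, hmx⟩ := Finset.mem_filter.mp hm
      ext y
      simp only [hT, Finset.mem_filter]
      constructor
      · rintro ⟨hy, hlt⟩; exact ⟨⟨hy, (le_of_lt hlt).trans hmx⟩, hlt⟩
      · rintro ⟨⟨hy, _⟩, hlt⟩; exact ⟨hy, hlt⟩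
    have hsupT : T.sup id = x := by
      apply le_antisymm
      · exact Finset.sup_le fun y hy => (Finset.mem_filter.mp hy).2
      · exact Finset.le_sup (f := id) (Finset.mem_filter.mpr ⟨hxM, le_refl x⟩)
    rw [Finset.sum_congr rfl (fun m hm => by rw [hsub m hm]), tele, hsupT]

/-- the "correlated maximum" function of finitely many
correlated random variables with values in a finite set `M ⊆ ℝ≥0` is a
coverage function: the explicit layered construction
`U = R × M`, `w (v,m) = p v * (m - prev m)`, `h i = {(v,m) : m ≤ v i}` works,
and in particular a coverage representation with ground set of size at most
`|R| · |M|` exists. -/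
theorem stmt10 (A : Type) [Fintype A] [DecidableEq A]
    (M : Finset NNReal) (R : Finset (A → NNReal)) (p : (A → NNReal) → ℝ)
    (hp : ∀ v, 0 ≤ p v) (hsum : ∑ v ∈ R, p v = 1)
    (hval : ∀ v ∈ R, ∀ i, v i ∈ M) :
    (∀ S : Finset A,
      ∑ u ∈ (R ×ˢ M).filter (fun u => ∃ i ∈ S, u.2 ≤ u.1 i),
          p u.1 * ((u.2 : ℝ) - (((M.filter (fun y => y < u.2)).sup id : NNReal) : ℝ))
        = ∑ v ∈ R, p v * ((S.sup v : NNReal) : ℝ)) ∧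
    ∃ (n : ℕ) (w : Fin n → ℝ) (h : A → Finset (Fin n)),
      n ≤ R.card * M.card ∧ (∀ u, 0 ≤ w u) ∧
      ∀ S : Finset A,
        ∑ u ∈ Finset.univ.filter (fun u => ∃ i ∈ S, u ∈ h i), w u
          = ∑ v ∈ R, p v * ((S.sup v : NNReal) : ℝ) := by
  classical
  have part1 : ∀ S : Finset A,
      ∑ u ∈ (R ×ˢ M).filter (fun u => ∃ i ∈ S, u.2 ≤ u.1 i),
          p u.1 * ((u.2 : ℝ) - (((M.filter (fun y => y < u.2)).sup id : NNReal) : ℝ))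
        = ∑ v ∈ R, p v * ((S.sup v : NNReal) : ℝ) := by
    intro S
    rw [Finset.sum_filter, Finset.sum_product]
    refine Finset.sum_congr rfl fun v hv => ?_
    dsimp only
    rw [← Finset.sum_filter, ← Finset.mul_sum, layerB A M v (hval v hv) S]
  refine ⟨part1, ?_⟩
  set n := (R ×ˢ M).card with hn
  have e : ↥(R ×ˢ M) ≃ Fin n := (R ×ˢ M).equivFin
  set f : (A → NNReal) × NNReal → ℝ := fun u =>
    p u.1 * ((u.2 : ℝ) - (((M.filter (fun y => y < u.2)).sup id : NNReal) : ℝ)) with hf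
  refine ⟨n, fun j => f (e.symm j).1,
    fun i => Finset.univ.filter (fun j => (e.symm j).1.2 ≤ (e.symm j).1.1 i), ?_, ?_, ?_⟩
  · rw [hn, Finset.card_product]
  · intro j
    apply mul_nonneg (hp _)
    rw [sub_nonneg, NNReal.coe_le_coe]
    exact Finset.sup_le fun y hy => le_of_lt (Finset.mem_filter.mp hy).2
  · intro S
    rw [← part1 S]
    rw [Finset.sum_filter, Finset.sum_filter]
    rw [← Equiv.sum_comp e (fun j =>
      if ∃ i ∈ S, j ∈ Finset.univ.filter (fun j => (e.symm j).1.2 ≤ (e.symm j).1.1 i)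
      then f (e.symm j).1 else 0)]
    rw [← Finset.sum_attach (R ×ˢ M) (fun u => if ∃ i ∈ S, u.2 ≤ u.1 i then f u else 0)]
    refine Finset.sum_congr rfl fun x _ => ?_
    simp [Equiv.symm_apply_apply]
end

section
/- For every coverage function f = (U, {w_u}, A, h), setting L = Σ_{u∈U} w_u, there exist random variables {X_i}_{i∈A} taking values in {0, L}, defined on a probability space with at most |U| atoms, such that for all S ⊆ A, f(S) = E[max_{i∈S} X_i]. -/
/-- every coverage function, with `L = Σ_u w u`, is the expected
maximum of random variables taking values in `{0, L}` on a probability space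
with at most `|U|` atoms. -/
theorem stmt11 (A ι : Type) [DecidableEq A] [DecidableEq ι]
    (U : Finset ι) (hU : U.Nonempty) (w : ι → NNReal) (h : A → Finset ι) :
    ∃ (n : ℕ) (q : Fin n → NNReal) (X : A → Fin n → NNReal),
      n ≤ U.card ∧ (∑ ω, q ω = 1) ∧
      (∀ i ω, X i ω = 0 ∨ X i ω = ∑ u ∈ U, w u) ∧
      ∀ S : Finset A,
        (∑ u ∈ U.filter (fun u => ∃ i ∈ S, u ∈ h i), w u)
          = ∑ ω, q ω * (S.sup fun i => X i ω) := by
  set L : NNReal := ∑ u ∈ U, w u with hL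
  by_cases hL0 : L = 0
  · -- all weights are zero
    have hw : ∀ u ∈ U, w u = 0 := by
      intro u hu
      exact (Finset.sum_eq_zero_iff.mp hL0.symm.symm) u hu
    refine ⟨1, fun _ => 1, fun _ _ => 0, ?_, by simp, fun i ω => Or.inl rfl, ?_⟩
    · exact Nat.one_le_iff_ne_zero.mpr (by simpa using hU.card_ne_zero)
    · intro S
      rw [Finset.sum_eq_zero (fun u hu => hw u (Finset.mem_filter.mp hu).1)]
      simp
      exact le_antisymm bot_le (Finset.sup_le fun _ _ => le_rfl)
  · -- main case
    set e : Fin U.card → ι := fun k => (U.equivFin.symm k : ι) with he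
    have heU : ∀ k, e k ∈ U := fun k => (U.equivFin.symm k).2
    refine ⟨U.card, fun ω => w (e ω) / L,
      fun i ω => if e ω ∈ h i then L else 0, le_refl _, ?_, ?_, ?_⟩
    · have : ∑ ω, w (e ω) = L := by
        rw [hL]
        exact Fintype.sum_equiv U.equivFin.symm _ _ (fun k => rfl) |>.trans
          (Finset.sum_coe_sort U w)
      rw [← Finset.sum_div, this, div_self hL0]
    · intro i ω
      by_cases hc : e ω ∈ h i <;> simp [hc]
    · intro S
      have hsup : ∀ ω, (S.sup fun i => if e ω ∈ h i then L else 0)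
          = if (∃ i ∈ S, e ω ∈ h i) then L else 0 := by
        intro ω
        by_cases hex : ∃ i ∈ S, e ω ∈ h i
        · obtain ⟨i, hiS, hi⟩ := hex
          rw [if_pos ⟨i, hiS, hi⟩]
          refine le_antisymm (Finset.sup_le fun j _ => ?_) ?_
          · split <;> simp
          · have := Finset.le_sup (f := fun i => if e ω ∈ h i then L else 0) hiS
            simpa [hi] using this
        · rw [if_neg hex]
          refine (Finset.sup_eq_bot_iff _ _).mpr fun j hj => ?_
          rw [if_neg fun hc => hex ⟨j, hj, hc⟩]; rfl
      have key : ∀ ω, w (e ω) / L * (S.sup fun i => if e ω ∈ h i then L else 0)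
          = if (∃ i ∈ S, e ω ∈ h i) then w (e ω) else 0 := by
        intro ω
        rw [hsup ω]
        by_cases hex : ∃ i ∈ S, e ω ∈ h i
        · rw [if_pos hex, if_pos hex, div_mul_cancel₀ _ hL0]
        · rw [if_neg hex, if_neg hex, mul_zero]
      rw [Finset.sum_congr rfl (fun ω _ => key ω)]
      have h2 : ∑ ω : Fin U.card, (if (∃ i ∈ S, e ω ∈ h i) then w (e ω) else 0)
          = ∑ u ∈ U, (if (∃ i ∈ S, u ∈ h i) then w u else 0) := by
        rw [← Finset.sum_coe_sort U]
        exact Fintype.sum_equiv U.equivFin.symm _ _ (fun k => rfl)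
      rw [Finset.sum_filter, ← h2]
end

section
/- The number of k-dimensional faces of an arrangement of n hyperplanes in ℝ^d is at most binom(n, d−k) · Σ_{i=0}^{k} binom(n − d + k, i). In particular, the total number of faces of an arrangement of n hyperplanes in ℝ^d is O(n^d) for fixed d. -/
/-!
A `k`-face is a nonempty sign cell, and its affine hull is the flat cut out by the hyperplanes
containing it; hence it is already cut out by `d - k` of them with independent normals. Fixing
such a set `S`, each face cut out by `S` is recovered from the region it determines in the
arrangement induced on that `k`-dimensional flat by the at most `n - d + k` hyperplanes not
containing it. In a convex set of dimension `k`, `m` hyperplanes cut out at most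
`∑_{i ≤ k} C(m, i)` regions, by deletion–restriction: deleting a hyperplane merges only pairs of
regions that both touch it, and these pairs are regions of the restriction to the hyperplane,
one dimension lower.
-/

open Module Set Finset Filter Topology

namespace Arrangement

variable {ι V : Type*} [AddCommGroup V] [Module ℝ V]

section AffineFunctional

variable (φ : V →ᵃ[ℝ] ℝ)

lemma sign_apply_lineMap_of_sign_eq {x y : V} {t : ℝ} (ht : t ∈ Icc (0 : ℝ) 1)
    (h : SignType.sign (φ x) = SignType.sign (φ y)) :
    SignType.sign (φ (AffineMap.lineMap x y t)) = SignType.sign (φ x) := by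
  rw [AffineMap.apply_lineMap]
  rcases lt_trichotomy (φ x) 0 with hx | hx | hx
  · have hy : φ y < 0 := by rwa [← sign_eq_neg_one_iff, ← h, sign_eq_neg_one_iff]
    rw [sign_neg hx, sign_neg ((convex_Iio 0).lineMap_mem hx hy ht)]
  · have hy : φ y = 0 := by rwa [← sign_eq_zero_iff, ← h, sign_eq_zero_iff]
    simp [hx, hy]
  · have hy : 0 < φ y := by rwa [← sign_eq_one_iff, ← h, sign_eq_one_iff]
    rw [sign_pos hx, sign_pos ((convex_Ioi 0).lineMap_mem hx hy ht)]

lemma exists_apply_lineMap_eq_zero {x y : V} (hx : 0 < φ x) (hy : φ y < 0) :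
    ∃ t ∈ Icc (0 : ℝ) 1, φ (AffineMap.lineMap x y t) = 0 := by
  have hxy : 0 < φ x - φ y := by linarith
  refine ⟨φ x / (φ x - φ y), ⟨by positivity, (div_le_one hxy).2 (by linarith)⟩, ?_⟩
  rw [AffineMap.apply_lineMap, AffineMap.lineMap_apply_ring']
  field_simp
  ring

lemma vectorSpan_le_ker_linear {s : Set V} {c : ℝ} (h : ∀ x ∈ s, φ x = c) :
    vectorSpan ℝ s ≤ LinearMap.ker φ.linear := by
  rw [vectorSpan_def, Submodule.span_le]
  rintro _ ⟨x, hx, y, hy, rfl⟩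
  rw [SetLike.mem_coe, LinearMap.mem_ker, φ.linearMap_vsub, h x hx, h y hy, vsub_self]

lemma finrank_vectorSpan_inter_zero_lt [FiniteDimensional ℝ V] {s : Set V} {x y : V}
    (hx : x ∈ s) (hy : y ∈ s) (hxy : φ x ≠ φ y) :
    finrank ℝ (vectorSpan ℝ (s ∩ {z | φ z = 0})) < finrank ℝ (vectorSpan ℝ s) := by
  refine Submodule.finrank_lt_finrank_of_lt
    (lt_of_le_of_ne (vectorSpan_mono ℝ inter_subset_left) fun h => hxy ?_)
  have hmem := vsub_mem_vectorSpan ℝ hx hy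
  rw [← h] at hmem
  have := vectorSpan_le_ker_linear φ (c := 0) (fun z hz => hz.2) hmem
  rwa [LinearMap.mem_ker, φ.linearMap_vsub, vsub_eq_sub, sub_eq_zero] at this

end AffineFunctional

lemma sum_range_choose_succ (m k : ℕ) :
    ∑ i ∈ range (k + 2), (m + 1).choose i
      = ∑ i ∈ range (k + 2), m.choose i + ∑ i ∈ range (k + 1), m.choose i := by
  rw [sum_range_succ' _ (k + 1), sum_range_succ' (m.choose ·) (k + 1)]
  simp only [Nat.choose_succ_succ', sum_add_distrib, Nat.choose_zero_right]
  ring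

variable (f : ι → V →ᵃ[ℝ] ℝ)

def signCell (σ : ι → SignType) : Set V :=
  {x | ∀ i, SignType.sign (f i x) = σ i}

/-- The regions cut out on `s` by the hyperplanes indexed by `t`, as sign vectors that vanish
exactly off `t`. -/
def regionsOn (s : Set V) (t : Finset ι) : Set (ι → SignType) :=
  {σ | (∀ i, σ i = 0 ↔ i ∉ t) ∧ ∃ x ∈ s, ∀ i ∈ t, SignType.sign (f i x) = σ i}

/-- The common direction of the hyperplanes indexed by `T`. -/
def linearKer (T : Set ι) : Submodule ℝ V :=
  (Submodule.span ℝ ((fun i => (f i).linear) '' T)).dualCoannihilator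

def zeroLocus (S : Finset ι) : Set V :=
  {x | ∀ i ∈ S, f i x = 0}

def faces (k : ℕ) : Set (ι → SignType) :=
  {σ | (signCell f σ).Nonempty ∧ finrank ℝ (affineSpan ℝ (signCell f σ)).direction = k}

lemma mem_linearKer {T : Set ι} {v : V} : v ∈ linearKer f T ↔ ∀ i ∈ T, (f i).linear v = 0 := by
  rw [linearKer, ← SetLike.mem_coe, Submodule.coe_dualCoannihilator_span]
  simp

section Regions

variable [DecidableEq ι]

def regionExtensions (s : Set V) (t : Finset ι) (a : ι) (c : SignType) : Set (ι → SignType) :=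
  {τ ∈ regionsOn f s t | Function.update τ a c ∈ regionsOn f s (insert a t)}

variable {s : Set V} {t : Finset ι} {a : ι}

lemma regionsOn_insert_subset (ha : a ∉ t) :
    regionsOn f s (insert a t) ⊆
      (Function.update · a 1) '' regionExtensions f s t a 1 ∪
        (Function.update · a (-1)) '' regionExtensions f s t a (-1) := by
  intro σ hσ
  have ⟨hzero, x, hx, hsign⟩ := hσ
  have hdel : Function.update σ a 0 ∈ regionExtensions f s t a (σ a) := by
    refine ⟨⟨fun i => ?_, x, hx, fun i hi => ?_⟩, by simpa using hσ⟩
    · rcases eq_or_ne i a with rfl | hia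
      · simpa using ha
      · simp [hzero i, hia]
    · rw [Function.update_of_ne (ne_of_mem_of_not_mem hi ha)]
      exact hsign i (mem_insert_of_mem hi)
  have hmem : ∀ c, σ a = c → σ ∈ (Function.update · a c) '' regionExtensions f s t a c :=
    fun c hc => ⟨_, hc ▸ hdel, by simp [← hc]⟩
  rcases hc : σ a with _ | _ | _
  · exact ((hzero a).1 hc (mem_insert_self a t)).elim
  · exact Or.inr (hmem (-1) hc)
  · exact Or.inl (hmem 1 hc)

lemma exists_mem_of_mem_regionExtensions (ha : a ∉ t) {c : SignType} {τ : ι → SignType}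
    (hτ : τ ∈ regionExtensions f s t a c) :
    ∃ x ∈ s, SignType.sign (f a x) = c ∧ ∀ i ∈ t, SignType.sign (f i x) = τ i := by
  obtain ⟨-, -, x, hx, hsign⟩ := hτ
  refine ⟨x, hx, by simpa using hsign a (mem_insert_self a t), fun i hi => ?_⟩
  simpa [ne_of_mem_of_not_mem hi ha] using hsign i (mem_insert_of_mem hi)

lemma regionExtensions_inter_subset (hs : Convex ℝ s) (ha : a ∉ t) :
    regionExtensions f s t a 1 ∩ regionExtensions f s t a (-1) ⊆
      regionsOn f (s ∩ {x | f a x = 0}) t := by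
  rintro τ ⟨hpos, hneg⟩
  obtain ⟨x, hx, hfx, hxt⟩ := exists_mem_of_mem_regionExtensions f ha hpos
  obtain ⟨y, hy, hfy, hyt⟩ := exists_mem_of_mem_regionExtensions f ha hneg
  obtain ⟨r, hr, hzero⟩ :=
    exists_apply_lineMap_eq_zero (f a) (sign_eq_one_iff.1 hfx) (sign_eq_neg_one_iff.1 hfy)
  refine ⟨hpos.1.1, _, ⟨hs.lineMap_mem hx hy hr, hzero⟩, fun i hi => ?_⟩
  rw [sign_apply_lineMap_of_sign_eq (f i) hr ((hxt i hi).trans (hyt i hi).symm), hxt i hi]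

lemma ncard_regionsOn_insert_le [Finite ι] (ha : a ∉ t) :
    (regionsOn f s (insert a t)).ncard ≤ (regionsOn f s t).ncard +
      (regionExtensions f s t a 1 ∩ regionExtensions f s t a (-1)).ncard := by
  calc (regionsOn f s (insert a t)).ncard
      ≤ (regionExtensions f s t a 1).ncard + (regionExtensions f s t a (-1)).ncard :=
        (ncard_le_ncard (regionsOn_insert_subset f ha)).trans <| (ncard_union_le _ _).trans <|
          add_le_add (ncard_image_le (toFinite _)) (ncard_image_le (toFinite _))
    _ = (regionExtensions f s t a 1 ∪ regionExtensions f s t a (-1)).ncard +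
          (regionExtensions f s t a 1 ∩ regionExtensions f s t a (-1)).ncard :=
        (ncard_union_add_ncard_inter _ _).symm
    _ ≤ _ := by
        gcongr
        · exact toFinite _
        · exact union_subset (sep_subset _ _) (sep_subset _ _)

end Regions

theorem ncard_regionsOn_le [Finite ι] [FiniteDimensional ℝ V] (t : Finset ι) {s : Set V} {k : ℕ}
    (hs : Convex ℝ s) (hk : finrank ℝ (vectorSpan ℝ s) ≤ k) :
    (regionsOn f s t).ncard ≤ ∑ i ∈ range (k + 1), (#t).choose i := by
  classical
  induction t using Finset.induction_on generalizing s k with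
  | empty =>
    have hsub : (regionsOn f s ∅).Subsingleton := fun σ hσ τ hτ =>
      funext fun i => ((hσ.1 i).2 (notMem_empty i)).trans ((hτ.1 i).2 (notMem_empty i)).symm
    calc (regionsOn f s ∅).ncard ≤ 1 := ncard_le_one_iff_subsingleton.2 hsub
      _ = _ := by simp [sum_range_succ']
  | insert a t ha ih =>
    rw [card_insert_of_notMem ha]
    refine (ncard_regionsOn_insert_le f ha).trans ?_
    rcases (regionExtensions f s t a 1 ∩ regionExtensions f s t a (-1)).eq_empty_or_nonempty
      with hI | ⟨τ, hpos, hneg⟩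
    · rw [hI, ncard_empty, add_zero]
      exact (ih hs hk).trans (sum_le_sum fun i _ => Nat.choose_le_choose i (Nat.le_succ _))
    · obtain ⟨x, hx, hfx, -⟩ := exists_mem_of_mem_regionExtensions f ha hpos
      obtain ⟨y, hy, hfy, -⟩ := exists_mem_of_mem_regionExtensions f ha hneg
      have hxy : f a x ≠ f a y :=
        ((sign_eq_neg_one_iff.1 hfy).trans (sign_eq_one_iff.1 hfx)).ne'
      have hlt := finrank_vectorSpan_inter_zero_lt (f a) hx hy hxy
      obtain ⟨k, rfl⟩ : ∃ k', k = k' + 1 := Nat.exists_eq_add_one.2 (by omega)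
      rw [sum_range_choose_succ]
      refine add_le_add (ih hs hk) ((ncard_le_ncard (regionExtensions_inter_subset f hs ha)).trans
        (ih (hs.inter ((convex_singleton 0).affine_preimage (f a))) (by omega)))

lemma eventually_smul_vadd_mem_signCell [Finite ι] {σ : ι → SignType} {x₀ v : V}
    (hx₀ : x₀ ∈ signCell f σ) (hv : v ∈ linearKer f {i | σ i = 0}) :
    ∀ᶠ ε in 𝓝 (0 : ℝ), ε • v +ᵥ x₀ ∈ signCell f σ := by
  refine eventually_all.2 fun i => ?_
  have hline : ∀ ε : ℝ, f i (ε • v +ᵥ x₀) = ε * (f i).linear v + f i x₀ := fun ε => by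
    rw [AffineMap.map_vadd, map_smul, smul_eq_mul, vadd_eq_add]
  by_cases hσ : σ i = 0
  · have hv0 := (mem_linearKer f).1 hv i hσ
    have hx0 : f i x₀ = 0 := sign_eq_zero_iff.1 ((hx₀ i).trans hσ)
    exact Eventually.of_forall fun ε => by rw [hline, hv0, hx0, hσ]; simp
  · have hx0 : f i x₀ ≠ 0 := fun h => hσ (by rw [← hx₀ i, h, sign_zero])
    have hcont : ContinuousAt (fun ε : ℝ => SignType.sign (f i (ε • v +ᵥ x₀))) 0 := by
      simp only [hline]
      exact (continuousAt_sign_of_ne_zero (by simpa using hx0)).comp (by fun_prop)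
    -- `SignType` is discrete, so the continuous sign is locally constant
    rw [ContinuousAt, nhds_discrete SignType, tendsto_pure] at hcont
    simpa [hx₀ i] using hcont

theorem vectorSpan_signCell [Finite ι] {σ : ι → SignType} (hne : (signCell f σ).Nonempty) :
    vectorSpan ℝ (signCell f σ) = linearKer f {i | σ i = 0} := by
  obtain ⟨x₀, hx₀⟩ := hne
  refine le_antisymm (fun v hv => (mem_linearKer f).2 fun i hi =>
    vectorSpan_le_ker_linear (f i) (fun x hx => sign_eq_zero_iff.1 ((hx i).trans hi)) hv)
    fun v hv => ?_
  obtain ⟨ε, hmem, hε⟩ := (((eventually_smul_vadd_mem_signCell f hx₀ hv).filter_mono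
    nhdsWithin_le_nhds).and (self_mem_nhdsWithin (s := {0}ᶜ))).exists
  have hεv : ε • v ∈ vectorSpan ℝ (signCell f σ) := by
    simpa using vsub_mem_vectorSpan ℝ hmem hx₀
  exact (Submodule.smul_mem_iff _ hε).1 hεv

lemma exists_finset_linearKer_eq [Finite ι] [FiniteDimensional ℝ V] (T : Set ι) :
    ∃ S : Finset ι, ↑S ⊆ T ∧ linearKer f S = linearKer f T ∧
      #S + finrank ℝ (linearKer f T) = finrank ℝ V := by
  obtain ⟨b, hbT, -, hspan, hind⟩ :=
    exists_linearIndepOn_extension (linearIndepOn_empty ℝ fun i => (f i).linear) (empty_subset T)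
  have hspan_eq : Submodule.span ℝ ((fun i => (f i).linear) '' b) =
      Submodule.span ℝ ((fun i => (f i).linear) '' T) :=
    le_antisymm (Submodule.span_mono (image_mono hbT)) (Submodule.span_le.2 hspan)
  have hb := toFinite b
  have : Fintype b := hb.fintype
  have hcard : finrank ℝ (Submodule.span ℝ ((fun i => (f i).linear) '' b)) = #hb.toFinset := by
    rw [image_eq_range, finrank_span_eq_card hind, hb.card_toFinset]
  refine ⟨hb.toFinset, by simpa using hbT, by simp [linearKer, hspan_eq], ?_⟩
  rw [linearKer, ← hspan_eq, ← hcard]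
  exact Subspace.finrank_add_finrank_dualCoannihilator_eq _

lemma convex_zeroLocus (S : Finset ι) : Convex ℝ (zeroLocus f S) := by
  intro x hx y hy p q _ _ hpq
  simp only [zeroLocus, mem_ofPred_eq] at hx hy ⊢
  intro i hi
  rw [Convex.combo_affine_apply hpq, hx i hi, hy i hi, smul_zero, smul_zero, add_zero]

lemma vectorSpan_zeroLocus_le (S : Finset ι) : vectorSpan ℝ (zeroLocus f S) ≤ linearKer f S :=
  fun _ hv => (mem_linearKer f).2 fun i hi =>
    vectorSpan_le_ker_linear (f i) (s := zeroLocus f S) (fun _ hx => hx i hi) hv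

/-- Faces whose affine hull is cut out by the hyperplanes indexed by `S` alone. -/
def facesCutOutBy (S : Finset ι) : Set (ι → SignType) :=
  {σ | (signCell f σ).Nonempty ∧ ↑S ⊆ {i | σ i = 0} ∧ linearKer f S ≤ linearKer f {i | σ i = 0}}

lemma exists_facesCutOutBy_subset_regionsOn [Fintype ι] (S : Finset ι) :
    ∃ t : Finset ι, #t ≤ Fintype.card ι - #S ∧
      facesCutOutBy f S ⊆ regionsOn f (zeroLocus f S) t := by
  classical
  refine ⟨univ.filter fun i => ∃ y ∈ zeroLocus f S, f i y ≠ 0, ?_, ?_⟩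
  · rw [← card_compl]
    refine card_le_card fun i hi => mem_compl.2 fun hiS => ?_
    obtain ⟨y, hy, hne⟩ := (mem_filter.1 hi).2
    exact hne (hy i hiS)
  · rintro σ ⟨⟨x, hx⟩, hS, hker⟩
    have hxZ : x ∈ zeroLocus f S := fun i hi => sign_eq_zero_iff.1 ((hx i).trans (hS hi))
    refine ⟨fun i => ?_, x, hxZ, fun i _ => hx i⟩
    simp only [mem_filter, Finset.mem_univ, true_and, not_exists, not_and, not_not]
    refine ⟨fun hσ y hy => ?_, fun h => by rw [← hx i, h x hxZ, sign_zero]⟩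
    -- `f i` vanishes at `x` and is constant along the direction of the flat
    have hyx := (mem_linearKer f).1 (hker (vectorSpan_zeroLocus_le f S
      (vsub_mem_vectorSpan ℝ hy hxZ))) i hσ
    rw [(f i).linearMap_vsub, vsub_eq_sub, sub_eq_zero] at hyx
    rw [hyx]
    exact sign_eq_zero_iff.1 ((hx i).trans hσ)

lemma ncard_facesCutOutBy_le [Fintype ι] [FiniteDimensional ℝ V] (S : Finset ι) {k : ℕ}
    (hk : finrank ℝ (linearKer f S) ≤ k) :
    (facesCutOutBy f S).ncard ≤ ∑ i ∈ range (k + 1), (Fintype.card ι - #S).choose i := by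
  obtain ⟨t, ht, hsub⟩ := exists_facesCutOutBy_subset_regionsOn f S
  calc (facesCutOutBy f S).ncard ≤ (regionsOn f (zeroLocus f S) t).ncard := ncard_le_ncard hsub
    _ ≤ ∑ i ∈ range (k + 1), (#t).choose i := ncard_regionsOn_le f t (convex_zeroLocus f S)
        ((Submodule.finrank_mono (vectorSpan_zeroLocus_le f S)).trans hk)
    _ ≤ _ := sum_le_sum fun i _ => Nat.choose_le_choose i ht

lemma faces_subset_biUnion_facesCutOutBy [Fintype ι] [FiniteDimensional ℝ V] (k : ℕ) :
    faces f k ⊆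
      ⋃ S ∈ (powersetCard (finrank ℝ V - k) univ).filter
        (fun S : Finset ι => finrank ℝ (linearKer f S) ≤ k), facesCutOutBy f S := by
  rintro σ ⟨hne, hk⟩
  rw [direction_affineSpan, vectorSpan_signCell f hne] at hk
  obtain ⟨S, hS, hker, hcard⟩ := exists_finset_linearKer_eq f {i | σ i = 0}
  refine Set.mem_biUnion (x := S) ?_ ⟨hne, hS, hker.le⟩
  rw [Finset.mem_coe, mem_filter, mem_powersetCard, hker, hk]
  exact ⟨⟨subset_univ S, by omega⟩, le_rfl⟩

theorem ncard_faces_le [Fintype ι] [FiniteDimensional ℝ V] (k : ℕ) :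
    (faces f k).ncard ≤
      (Fintype.card ι).choose (finrank ℝ V - k) *
        ∑ i ∈ range (k + 1), (Fintype.card ι - finrank ℝ V + k).choose i := by
  set P := (powersetCard (finrank ℝ V - k) (univ : Finset ι)).filter
    (fun S : Finset ι => finrank ℝ (linearKer f S) ≤ k)
  have hfiber : ∀ S ∈ P, (facesCutOutBy f S).ncard ≤
      ∑ i ∈ range (k + 1), (Fintype.card ι - finrank ℝ V + k).choose i := by
    intro S hS
    obtain ⟨⟨-, hcard⟩, hk⟩ := mem_filter.1 hS |>.imp_left mem_powersetCard.1
    exact (ncard_facesCutOutBy_le f S hk).trans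
      (sum_le_sum fun i _ => Nat.choose_le_choose i (by omega))
  calc _ ≤ (⋃ S ∈ P, facesCutOutBy f S).ncard :=
        ncard_le_ncard (faces_subset_biUnion_facesCutOutBy f k)
    _ ≤ ∑ S ∈ P, (facesCutOutBy f S).ncard := set_ncard_biUnion_le _ _
    _ ≤ #P * ∑ i ∈ range (k + 1), (Fintype.card ι - finrank ℝ V + k).choose i :=
        sum_le_card_nsmul _ _ _ hfiber
    _ ≤ _ := by
        gcongr
        exact (card_filter_le _ _).trans_eq (by rw [card_powersetCard, card_univ])

end Arrangement

theorem stmt14_general (n d k : ℕ)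
    (a : Fin n → (Fin d → ℝ)) (b : Fin n → ℝ) :
    {σ : Fin n → SignType |
        (∃ x : Fin d → ℝ, ∀ i, SignType.sign ((∑ j, a i j * x j) - b i) = σ i) ∧
        Module.finrank ℝ (affineSpan ℝ {x : Fin d → ℝ |
            ∀ i, SignType.sign ((∑ j, a i j * x j) - b i) = σ i}).direction = k}.ncard
      ≤ n.choose (d - k) * ∑ i ∈ Finset.range (k + 1), (n - d + k).choose i := by
  have h := Arrangement.ncard_faces_le
    (fun i => (dotProductBilin ℝ ℝ (a i)).toAffineMap - AffineMap.const ℝ (Fin d → ℝ) (b i)) k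
  rwa [Fintype.card_fin, Module.finrank_fin_fun] at h

/-- Zaslavsky's bound: the number of `k`-dimensional faces of
an arrangement of `n` hyperplanes in `ℝ^d` is at most
`binom(n, d-k) · Σ_{i=0}^{k} binom(n-d+k, i)`.  Faces are encoded by their
sign vectors: a face of dimension `k` corresponds to a nonempty sign cell
whose affine span has dimension `k`. -/
theorem stmt14 (n d k : ℕ) (hk : k ≤ d)
    (a : Fin n → (Fin d → ℝ)) (b : Fin n → ℝ) (ha : ∀ i, a i ≠ 0) :
    {σ : Fin n → SignType |
        (∃ x : Fin d → ℝ, ∀ i, SignType.sign ((∑ j, a i j * x j) - b i) = σ i) ∧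
        Module.finrank ℝ (affineSpan ℝ {x : Fin d → ℝ |
            ∀ i, SignType.sign ((∑ j, a i j * x j) - b i) = σ i}).direction = k}.ncard
      ≤ n.choose (d - k) * ∑ i ∈ Finset.range (k + 1), (n - d + k).choose i :=
  stmt14_general n d k a b
end

section
/- In the Ω(n)-gap instance, for every α ∈ [0,1], the principal's utility from the linear contract t_α is at most n/2^n. Concretely: with actions i = 1,...,n of cost c_i = (2^i − i)/2^{n+1}, success probability p_i := 2^{i−n−1} (probability of a reward-1 outcome), if î = max{i : 1 − i·2^{−i} ≤ α} (or 0 if no such i), then (1 − α)·(1 − Π_{i=1}^{î}(1 − p_i)) ≤ (1 − α)·2^{î − n} ≤ î·2^{−n} ≤ n/2^n. -/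
private lemma weier (s : Finset ℕ) (f : ℕ → ℝ) (h0 : ∀ i ∈ s, 0 ≤ f i)
    (h1 : ∀ i ∈ s, f i ≤ 1) : 1 - ∑ i ∈ s, f i ≤ ∏ i ∈ s, (1 - f i) := by
  induction s using Finset.induction with
  | empty => simp
  | @insert a s ha ih =>
    rw [Finset.sum_insert ha, Finset.prod_insert ha]
    have ih' := ih (fun i hi => h0 i (Finset.mem_insert_of_mem hi))
      (fun i hi => h1 i (Finset.mem_insert_of_mem hi))
    have hfa0 := h0 a (Finset.mem_insert_self a s)
    have hfa1 := h1 a (Finset.mem_insert_self a s)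
    have hs0 : (0:ℝ) ≤ ∑ i ∈ s, f i :=
      Finset.sum_nonneg fun i hi => h0 i (Finset.mem_insert_of_mem hi)
    nlinarith [mul_le_mul_of_nonneg_left ih' (by linarith : (0:ℝ) ≤ 1 - f a)]

private lemma sumlem (n m : ℕ) :
    ∑ i ∈ Finset.Icc 1 m, (2:ℝ) ^ ((i:ℤ) - n - 1) = 2 ^ ((m:ℤ) - n) - 2 ^ (-(n:ℤ)) := by
  induction m with
  | zero => simp
  | succ m ih =>
    rw [Finset.sum_Icc_succ_top (by omega : 1 ≤ m + 1), ih]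
    have h1 : ((m:ℤ) + 1 - n - 1) = (m:ℤ) - n := by ring
    have h2 : ((m + 1 : ℕ) : ℤ) - n = ((m:ℤ) - n) + 1 := by push_cast; ring
    rw [h2]
    push_cast [h1, zpow_add₀ (by norm_num : (2:ℝ) ≠ 0)]
    ring

/-- in the Ω(n)-gap instance, for every `α ∈ [0,1]` the
principal's utility from the linear contract `t_α` is at most `n/2^n`, via the
chain of inequalities with `î = max {i ∈ [1,n] : 1 - i·2^{-i} ≤ α}`. -/
theorem stmt15 (n : ℕ) (hn : 1 ≤ n) (α : ℝ) (hα : α ∈ Set.Icc (0:ℝ) 1)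
    (ihat : ℕ)
    (hihat : ihat = ((Finset.Icc 1 n).filter
        (fun (i : ℕ) => 1 - (i : ℝ) * (2:ℝ) ^ (-(i:ℤ)) ≤ α)).sup id) :
    ((1 - α) * (1 - ∏ i ∈ Finset.Icc 1 ihat, (1 - (2:ℝ) ^ ((i:ℤ) - n - 1)))
        ≤ (n : ℝ) / 2 ^ n) ∧
    (((Finset.Icc 1 n).filter
        (fun (i : ℕ) => 1 - (i : ℝ) * (2:ℝ) ^ (-(i:ℤ)) ≤ α)).Nonempty →
      ((1 - α) * (1 - ∏ i ∈ Finset.Icc 1 ihat, (1 - (2:ℝ) ^ ((i:ℤ) - n - 1)))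
          ≤ (1 - α) * (2:ℝ) ^ ((ihat:ℤ) - n)) ∧
      ((1 - α) * (2:ℝ) ^ ((ihat:ℤ) - n) ≤ (ihat : ℝ) * (2:ℝ) ^ (-(n:ℤ))) ∧
      ((ihat : ℝ) * (2:ℝ) ^ (-(n:ℤ)) ≤ (n : ℝ) / 2 ^ n)) := by
  obtain ⟨hα0, hα1⟩ := hα
  set S := (Finset.Icc 1 n).filter
      (fun (i : ℕ) => 1 - (i : ℝ) * (2:ℝ) ^ (-(i:ℤ)) ≤ α) with hS
  have h1α : (0:ℝ) ≤ 1 - α := by linarith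
  have hile : ihat ≤ n := by
    rw [hihat]
    exact Finset.sup_le fun i hi => (Finset.mem_Icc.mp (Finset.mem_filter.mp hi).1).2
  have hndiv : (n:ℝ) / 2 ^ n = (n:ℝ) * (2:ℝ) ^ (-(n:ℤ)) := by
    rw [zpow_neg, zpow_natCast, div_eq_mul_inv]
  -- block chain (used in both parts)
  have hb1 : (1 - α) * (1 - ∏ i ∈ Finset.Icc 1 ihat, (1 - (2:ℝ) ^ ((i:ℤ) - n - 1)))
      ≤ (1 - α) * (2:ℝ) ^ ((ihat:ℤ) - n) := by
    apply mul_le_mul_of_nonneg_left _ h1α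
    have hw := weier (Finset.Icc 1 ihat) (fun i => (2:ℝ) ^ ((i:ℤ) - n - 1))
      (fun i _ => by positivity)
      (fun i hi => by
        have := (Finset.mem_Icc.mp hi).2
        have : (i:ℤ) - n - 1 ≤ 0 := by
          have : (i:ℤ) ≤ n := by exact_mod_cast le_trans this hile
          omega
        calc (2:ℝ) ^ ((i:ℤ) - n - 1) ≤ (2:ℝ) ^ (0:ℤ) :=
              zpow_le_zpow_right₀ (by norm_num) this
          _ = 1 := by norm_num)
    have hs := sumlem n ihat
    have hpos : (0:ℝ) < 2 ^ (-(n:ℤ)) := by positivity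
    have : 1 - ∏ i ∈ Finset.Icc 1 ihat, (1 - (2:ℝ) ^ ((i:ℤ) - n - 1))
        ≤ ∑ i ∈ Finset.Icc 1 ihat, (2:ℝ) ^ ((i:ℤ) - n - 1) := by linarith [hw]
    rw [hs] at this
    linarith
  have hb3 : (ihat : ℝ) * (2:ℝ) ^ (-(n:ℤ)) ≤ (n : ℝ) / 2 ^ n := by
    rw [hndiv]
    exact mul_le_mul_of_nonneg_right (by exact_mod_cast hile) (by positivity)
  constructor
  · by_cases hne : S.Nonempty
    · -- use the chain; need hb2
      obtain ⟨j, hjS, hj⟩ := Finset.exists_mem_eq_sup S hne id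
      have hjihat : ihat = j := by rw [hihat, hj]; rfl
      have hjmem := Finset.mem_filter.mp hjS
      have hkey : 1 - α ≤ (ihat : ℝ) * (2:ℝ) ^ (-(ihat:ℤ)) := by
        rw [hjihat]; linarith [hjmem.2]
      have hb2 : (1 - α) * (2:ℝ) ^ ((ihat:ℤ) - n) ≤ (ihat : ℝ) * (2:ℝ) ^ (-(n:ℤ)) := by
        calc (1 - α) * (2:ℝ) ^ ((ihat:ℤ) - n)
            ≤ ((ihat : ℝ) * (2:ℝ) ^ (-(ihat:ℤ))) * (2:ℝ) ^ ((ihat:ℤ) - n) :=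
              mul_le_mul_of_nonneg_right hkey (by positivity)
          _ = (ihat : ℝ) * (2:ℝ) ^ (-(n:ℤ)) := by
              rw [mul_assoc, ← zpow_add₀ (by norm_num : (2:ℝ) ≠ 0)]
              congr 2
              omega
      linarith
    · have : ihat = 0 := by
        rw [hihat, Finset.not_nonempty_iff_eq_empty.mp hne]; rfl
      rw [this]
      norm_num
      positivity
  · intro hne
    obtain ⟨j, hjS, hj⟩ := Finset.exists_mem_eq_sup S hne id
    have hjihat : ihat = j := by rw [hihat, hj]; rfl
    have hjmem := Finset.mem_filter.mp hjS
    have hkey : 1 - α ≤ (ihat : ℝ) * (2:ℝ) ^ (-(ihat:ℤ)) := by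
      rw [hjihat]; linarith [hjmem.2]
    have hb2 : (1 - α) * (2:ℝ) ^ ((ihat:ℤ) - n) ≤ (ihat : ℝ) * (2:ℝ) ^ (-(n:ℤ)) := by
      calc (1 - α) * (2:ℝ) ^ ((ihat:ℤ) - n)
          ≤ ((ihat : ℝ) * (2:ℝ) ^ (-(ihat:ℤ))) * (2:ℝ) ^ ((ihat:ℤ) - n) :=
            mul_le_mul_of_nonneg_right hkey (by positivity)
        _ = (ihat : ℝ) * (2:ℝ) ^ (-(n:ℤ)) := by
            rw [mul_assoc, ← zpow_add₀ (by norm_num : (2:ℝ) ≠ 0)]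
            congr 2
            omega
    exact ⟨hb1, hb2, hb3⟩
end

section
/- In the Ω(n)-gap instance with the general contract t(1)=0, t(2)=1, t(3)=ε (ε ∈ (0,1)), the principal's utility is at least (1−ε)·Σ_{i=1}^{n} (1 − 2^{i−n−1})·(i/2^{n+1}) ≥ (1−ε)·(1/2^{n+2})·Σ_{i=1}^{n} i = Ω(n²/2^n). Consequently, combined with the n/2^n upper bound for all linear contracts, the ratio between the optimal general-contract utility and the optimal linear-contract utility in this instance is Ω(n). -/
/-!
Under the contract `t = (0, 1, ε)` outcome 2 pays nothing to the principal and outcome 3 pays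
`1 - ε`, while `p₃ i = 2^{i-n-1} - c i = i / 2^{n+1}`. The probability `∏_{k<i} p₁ k` of reaching
action `i` is at least `1 - ∑_{k<i} 2^{k-n-1} ≥ 1 - 2^{i-n-1} ≥ 1/2` (Weierstrass' product
inequality and a geometric sum), so the utility is at least `(1 - ε) ∑ i / 2^{n+2}`, and Gauss'
sum `∑ i = n(n+1)/2` gives the comparison with `n / 2^n`.
-/

open Finset

theorem Finset.one_sub_sum_le_prod_one_sub {ι R : Type*} [CommRing R] [PartialOrder R]
    [IsOrderedRing R] (s : Finset ι) {a : ι → R} (h0 : ∀ k ∈ s, 0 ≤ a k)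
    (h1 : ∀ k ∈ s, a k ≤ 1) : 1 - ∑ k ∈ s, a k ≤ ∏ k ∈ s, (1 - a k) := by
  classical
  induction s using Finset.induction_on with
  | empty => simp
  | insert j s hj ih =>
    simp only [mem_insert, forall_eq_or_imp] at h0 h1
    rw [sum_insert hj, prod_insert hj]
    calc 1 - (a j + ∑ k ∈ s, a k) ≤ (1 - a j) * (1 - ∑ k ∈ s, a k) := by
          rw [show (1 - a j) * (1 - ∑ k ∈ s, a k) = 1 - (a j + ∑ k ∈ s, a k) + a j * ∑ k ∈ s, a k
            by ring]
          exact le_add_of_nonneg_right (mul_nonneg h0.1 (sum_nonneg h0.2))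
      _ ≤ (1 - a j) * ∏ k ∈ s, (1 - a k) :=
          mul_le_mul_of_nonneg_left (ih h0.2 h1.2) (sub_nonneg.2 h1.1)

theorem sum_Icc_one_natCast (n : ℕ) : ∑ i ∈ Icc 1 n, (i : ℝ) = n * (n + 1) / 2 := by
  induction n with
  | zero => simp
  | succ m ih =>
    rw [sum_Icc_succ_top (by omega), ih]
    push_cast
    ring

theorem sum_Ico_one_two_pow_le (i : ℕ) : ∑ k ∈ Ico 1 i, (2 : ℝ) ^ k ≤ 2 ^ i := by
  rcases Nat.eq_zero_or_pos i with rfl | hi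
  · simp
  · have := geom_sum_Ico_mul (2 : ℝ) hi
    norm_num at this
    linarith

theorem one_sub_two_pow_div_le_prod {N i : ℕ} (hi : i ≤ N) :
    1 - (2 : ℝ) ^ i / 2 ^ N ≤ ∏ k ∈ Ico 1 i, (1 - (2 : ℝ) ^ k / 2 ^ N) := by
  calc 1 - (2 : ℝ) ^ i / 2 ^ N ≤ 1 - ∑ k ∈ Ico 1 i, (2 : ℝ) ^ k / 2 ^ N := by
        rw [← sum_div]
        gcongr
        exact sum_Ico_one_two_pow_le i
    _ ≤ _ := one_sub_sum_le_prod_one_sub _ (fun k _ => by positivity) fun k hk =>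
        div_le_one_of_le₀ (pow_le_pow_right₀ one_le_two (by grind)) (by positivity)

theorem two_zpow_natCast_sub_sub_one (i n : ℕ) :
    (2 : ℝ) ^ ((i : ℤ) - n - 1) = 2 ^ i / 2 ^ (n + 1) := by
  rw [sub_sub, ← Nat.cast_succ, zpow_sub₀ two_ne_zero, zpow_natCast, zpow_natCast]

theorem stmt16_general (n : ℕ) (ε : ℝ) (hε : ε ∈ Set.Ioo (0:ℝ) 1)
    (c p1 p2 p3 : ℕ → ℝ)
    (hc : ∀ i, c i = ((2:ℝ) ^ i - (i:ℝ)) / 2 ^ (n+1))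
    (hp1 : ∀ i, p1 i = 1 - (2:ℝ) ^ ((i:ℤ) - n - 1))
    (hp3 : ∀ i, p3 i = (2:ℝ) ^ ((i:ℤ) - n - 1) - c i) :
    (∑ i ∈ Finset.Icc 1 n, (∏ k ∈ Finset.Icc 1 (i-1), p1 k) *
        (p2 i * (1 - 1) + p3 i * (1 - ε))
      ≥ (1 - ε) * ∑ i ∈ Finset.Icc 1 n,
          (1 - (2:ℝ) ^ ((i:ℤ) - n - 1)) * ((i:ℝ) / 2 ^ (n+1))) ∧
    ((1 - ε) * ∑ i ∈ Finset.Icc 1 n,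
          (1 - (2:ℝ) ^ ((i:ℤ) - n - 1)) * ((i:ℝ) / 2 ^ (n+1))
      ≥ (1 - ε) * (1 / 2 ^ (n+2)) * ∑ i ∈ Finset.Icc 1 n, (i:ℝ)) ∧
    ((1 - ε) * (1 / 2 ^ (n+2)) * ∑ i ∈ Finset.Icc 1 n, (i:ℝ)
      ≥ (1 - ε) * ((n:ℝ) / 8) * ((n:ℝ) / 2 ^ n)) := by
  have h1ε : 0 ≤ 1 - ε := sub_nonneg.2 hε.2.le
  simp only [two_zpow_natCast_sub_sub_one] at hp1 hp3 ⊢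
  refine ⟨?_, ?_, ?_⟩
  · rw [ge_iff_le, mul_sum]
    refine sum_le_sum fun i hi => ?_
    have hp3i : p3 i = i / 2 ^ (n + 1) := by rw [hp3, hc]; ring
    have hreach := one_sub_two_pow_div_le_prod (N := n + 1) (i := i) (by grind)
    rw [show Icc 1 (i - 1) = Ico 1 i by ext; simp only [mem_Icc, mem_Ico]; omega, prod_congr rfl fun k _ => hp1 k,
      sub_self, mul_zero, zero_add, hp3i]
    calc (1 - ε) * ((1 - 2 ^ i / 2 ^ (n + 1)) * (i / 2 ^ (n + 1)))
        = (1 - 2 ^ i / 2 ^ (n + 1)) * (i / 2 ^ (n + 1) * (1 - ε)) := by ring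
      _ ≤ _ := by gcongr
  · rw [ge_iff_le, mul_assoc]
    refine mul_le_mul_of_nonneg_left ?_ h1ε
    rw [mul_sum]
    refine sum_le_sum fun i hi => ?_
    have hhalf : (2 : ℝ) ^ i / 2 ^ (n + 1) ≤ 1 / 2 := by
      rw [div_le_div_iff₀ (by positivity) two_pos, one_mul, ← pow_succ]
      exact pow_le_pow_right₀ one_le_two (by grind)
    calc 1 / 2 ^ (n + 2) * (i : ℝ) = 1 / 2 * (i / 2 ^ (n + 1)) := by ring
      _ ≤ _ := by gcongr; linarith
  · rw [ge_iff_le, sum_Icc_one_natCast, mul_assoc, mul_assoc]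
    refine mul_le_mul_of_nonneg_left ?_ h1ε
    rw [pow_add]
    field_simp
    nlinarith

/-- in the Ω(n)-gap instance, the general contract
`t(1)=0, t(2)=1, t(3)=ε` gives the principal utility at least
`(1-ε)·Σ_i (1-2^{i-n-1})·i/2^{n+1} ≥ (1-ε)·(1/2^{n+2})·Σ_i i = Ω(n²/2^n)`,
which is at least `(1-ε)·(n/8)` times the `n/2^n` upper bound for linear
contracts, i.e. an Ω(n) gap. -/
theorem stmt16 (n : ℕ) (hn : 1 ≤ n) (ε : ℝ) (hε : ε ∈ Set.Ioo (0:ℝ) 1)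
    (c p1 p2 p3 : ℕ → ℝ)
    (hc : ∀ i, c i = ((2:ℝ) ^ i - (i:ℝ)) / 2 ^ (n+1))
    (hp1 : ∀ i, p1 i = 1 - (2:ℝ) ^ ((i:ℤ) - n - 1))
    (hp2 : ∀ i, p2 i = c i)
    (hp3 : ∀ i, p3 i = (2:ℝ) ^ ((i:ℤ) - n - 1) - c i) :
    (∑ i ∈ Finset.Icc 1 n, (∏ k ∈ Finset.Icc 1 (i-1), p1 k) *
        (p2 i * (1 - 1) + p3 i * (1 - ε))
      ≥ (1 - ε) * ∑ i ∈ Finset.Icc 1 n,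
          (1 - (2:ℝ) ^ ((i:ℤ) - n - 1)) * ((i:ℝ) / 2 ^ (n+1))) ∧
    ((1 - ε) * ∑ i ∈ Finset.Icc 1 n,
          (1 - (2:ℝ) ^ ((i:ℤ) - n - 1)) * ((i:ℝ) / 2 ^ (n+1))
      ≥ (1 - ε) * (1 / 2 ^ (n+2)) * ∑ i ∈ Finset.Icc 1 n, (i:ℝ)) ∧
    ((1 - ε) * (1 / 2 ^ (n+2)) * ∑ i ∈ Finset.Icc 1 n, (i:ℝ)
      ≥ (1 - ε) * ((n:ℝ) / 8) * ((n:ℝ) / 2 ^ n)) :=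
  stmt16_general n ε hε c p1 p2 p3 hc hp1 hp3
end

section
/- In the binary-outcome correlated model with success function f and costs c_i, for the strategy π = (s_1,...,s_ℓ) that stops upon first success, the expected cost is c(π) = Σ_{i=1}^{ℓ} (1 − f({s_1,...,s_{i−1}}))·c_{s_i}. If f restricted to A' satisfies f(T) ≤ |T|/k for all T ⊆ A' and all c_i = 1.5/(k+1) for i ∈ A', then for any π over A' with ℓ ≤ k actions, c(π) ≥ (1.5/(k+1))·ℓ·(2k − ℓ + 1)/(2k) ≥ 1.5·ℓ/(2k) ≥ (3/4)·(ℓ/k); consequently the agent's utility under linear contract α = 3/4 satisfies u_A = (3/4)·f({s_1,...,s_ℓ}) − c(π) ≤ 0. -/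
lemma sum_id_real (n : ℕ) : ∑ i ∈ Finset.range n, (i:ℝ) = n * (n - 1) / 2 := by
  induction n with
  | zero => simp
  | succ n ih =>
    rw [Finset.sum_range_succ, ih]
    push_cast
    ring

/-- in the binary-outcome correlated model, the expected cost of
a strategy `π = (s 0, …, s (ℓ-1))` of length `ℓ ≤ k` over `A'` (with `f(T) ≤
|T|/k` and all costs `1.5/(k+1)`) satisfies the stated chain of lower bounds,
and hence the agent's utility under linear contract `α = 3/4` is nonpositive. -/
theorem stmt18 (A' : Type) [DecidableEq A'] (k ℓ : ℕ) (hk : 0 < k) (hℓ : ℓ ≤ k)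
    (f : Finset A' → ℝ) (hf : ∀ T, f T ≤ (T.card : ℝ) / k)
    (s : Fin ℓ → A') (cost : ℝ)
    (hcost : cost = ∑ i : Fin ℓ,
      (1 - f (((Finset.univ : Finset (Fin ℓ)).filter (fun j => j < i)).image s)) *
        (1.5 / ((k:ℝ) + 1))) :
    (cost ≥ (1.5 / ((k:ℝ) + 1)) * ℓ * (2 * (k:ℝ) - ℓ + 1) / (2 * k)) ∧
    ((1.5 / ((k:ℝ) + 1)) * ℓ * (2 * (k:ℝ) - ℓ + 1) / (2 * k)
        ≥ 1.5 * (ℓ:ℝ) / (2 * k)) ∧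
    (1.5 * (ℓ:ℝ) / (2 * k) ≥ (3/4) * ((ℓ:ℝ) / k)) ∧
    ((3/4) * f (Finset.univ.image s) - cost ≤ 0) := by
  have hk0 : (0:ℝ) < k := by exact_mod_cast hk
  have hk1 : (0:ℝ) < (k:ℝ) + 1 := by linarith
  have hc : (0:ℝ) ≤ 1.5 / ((k:ℝ) + 1) := by positivity
  have hlk : (ℓ:ℝ) ≤ k := by exact_mod_cast hℓ
  -- key pointwise bound
  have key : ∀ i : Fin ℓ,
      f (((Finset.univ : Finset (Fin ℓ)).filter (fun j => j < i)).image s)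
        ≤ (i:ℝ) / k := by
    intro i
    refine (hf _).trans ?_
    have hcard : (((Finset.univ : Finset (Fin ℓ)).filter (fun j => j < i)).image s).card
        ≤ (i : ℕ) := by
      refine (Finset.card_image_le).trans ?_
      have h : ((Finset.univ : Finset (Fin ℓ)).filter (fun j => j < i)) = Finset.Iio i := by
        ext j; simp
      rw [h, Fin.card_Iio]
    have : ((((Finset.univ : Finset (Fin ℓ)).filter (fun j => j < i)).image s).card : ℝ)
        ≤ (i:ℝ) := by exact_mod_cast hcard
    exact div_le_div_of_nonneg_right this hk0.le
  -- lower bound on cost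
  have h1 : cost ≥ (1.5 / ((k:ℝ) + 1)) * ℓ * (2 * (k:ℝ) - ℓ + 1) / (2 * k) := by
    rw [hcost]
    have hsum : ∑ i : Fin ℓ, (1 - (i:ℝ)/k) * (1.5 / ((k:ℝ) + 1))
        ≤ ∑ i : Fin ℓ,
          (1 - f (((Finset.univ : Finset (Fin ℓ)).filter (fun j => j < i)).image s)) *
            (1.5 / ((k:ℝ) + 1)) := by
      apply Finset.sum_le_sum
      intro i _
      have h := key i
      nlinarith [hc, h]
    have hval : ∑ i : Fin ℓ, (1 - (i:ℝ)/k) * (1.5 / ((k:ℝ) + 1))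
        = (1.5 / ((k:ℝ) + 1)) * ℓ * (2 * (k:ℝ) - ℓ + 1) / (2 * k) := by
      rw [Fin.sum_univ_eq_sum_range (fun i => (1 - (i:ℝ)/k) * (1.5 / ((k:ℝ) + 1)))]
      rw [← Finset.sum_mul]
      have : ∑ i ∈ Finset.range ℓ, (1 - (i:ℝ)/k)
          = (ℓ:ℝ) - ((ℓ:ℝ) * ((ℓ:ℝ) - 1) / 2) / k := by
        rw [Finset.sum_sub_distrib, Finset.sum_const, ← Finset.sum_div, sum_id_real]
        simp
      rw [this]
      field_simp
      ring
    linarith [hsum]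
  have h2 : (1.5 / ((k:ℝ) + 1)) * ℓ * (2 * (k:ℝ) - ℓ + 1) / (2 * k)
      ≥ 1.5 * (ℓ:ℝ) / (2 * k) := by
    have hdiff : (1.5 / ((k:ℝ) + 1)) * ℓ * (2 * (k:ℝ) - ℓ + 1) / (2 * k)
        - 1.5 * (ℓ:ℝ) / (2 * k)
        = 1.5 * (ℓ:ℝ) * ((k:ℝ) - ℓ) / (((k:ℝ) + 1) * (2 * k)) := by
      field_simp
      ring
    have hnn : (0:ℝ) ≤ 1.5 * (ℓ:ℝ) * ((k:ℝ) - ℓ) / (((k:ℝ) + 1) * (2 * k)) := by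
      apply div_nonneg
      · have : (0:ℝ) ≤ (k:ℝ) - ℓ := by linarith
        positivity
      · positivity
    linarith
  have h3 : 1.5 * (ℓ:ℝ) / (2 * k) ≥ (3/4) * ((ℓ:ℝ) / k) := by
    have : 1.5 * (ℓ:ℝ) / (2 * k) = (3/4) * ((ℓ:ℝ) / k) := by
      field_simp; ring
    linarith
  refine ⟨h1, h2, h3, ?_⟩
  have hfu : f (Finset.univ.image s) ≤ (ℓ:ℝ) / k := by
    refine (hf _).trans ?_
    have hcard : ((Finset.univ : Finset (Fin ℓ)).image s).card ≤ ℓ := by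
      simpa using (Finset.card_image_le (s := (Finset.univ : Finset (Fin ℓ))) (f := s))
    have : (((Finset.univ : Finset (Fin ℓ)).image s).card : ℝ) ≤ (ℓ:ℝ) := by
      exact_mod_cast hcard
    exact div_le_div_of_nonneg_right this hk0.le
  nlinarith [h1, h2, h3, hfu, hk0, mul_pos hk0 hk0]
end
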